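/- arXiv:2409.11077 — 7 statements merged into one kernel-verified Lean document; each statement's English description precedes it below -/
import Mathlib

section
/- Let R > 0, M > 0, Δ > 0, let φ = (1+√5)/2 be the golden ratio, and let f : [0,R] → ℝ be convex and M-Lipschitz. Set C = e·R·M·ln(φ)/(2φ), and suppose n₀ := log_φ(C/(e·Δ)) is a nonnegative integer. Let (a_k)_{k=0}^{n₀}, (b_k)_{k=0}^{n₀} be a noisy golden-ratio-method run of length n₀ for f with noise level Δ on [0,R]. Then the midpoint x₀ = (a_{n₀} + b_{n₀})/2 satisfies f(x₀) − min_{x∈[0,R]} f(x) ≤ φ·Δ·log_φ(C/Δ). -/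
/-- A noisy golden-ratio-method run of length `n` for `f` with noise level `Δ` on `[0, R]`:
sequences `a`, `b` with `a 0 = 0`, `b 0 = R`, and at each step `k < n`, with
`s = b k - (b k - a k)/φ` and `t = a k + (b k - a k)/φ`, either the left part is discarded
(and `f s ≥ f t - Δ`) or the right part is discarded (and `f t ≥ f s - Δ`). -/
def GoldenRatioRun (f : ℝ → ℝ) (R Δ : ℝ) (n : ℕ) (a b : ℕ → ℝ) : Prop :=
  a 0 = 0 ∧ b 0 = R ∧ ∀ k < n,
    (a (k + 1) = b k - (b k - a k) / Real.goldenRatio ∧ b (k + 1) = b k ∧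
      f (b k - (b k - a k) / Real.goldenRatio) ≥ f (a k + (b k - a k) / Real.goldenRatio) - Δ) ∨
    (a (k + 1) = a k ∧ b (k + 1) = a k + (b k - a k) / Real.goldenRatio ∧
      f (a k + (b k - a k) / Real.goldenRatio) ≥ f (b k - (b k - a k) / Real.goldenRatio) - Δ)

/-- Core convexity estimate: if `v = l·u + (1-l)·w` with `2-φ ≤ l ≤ 1` and
`f w - Δ ≤ f v`, then `f v ≤ f u + φ·Δ`. -/
lemma golden_key_convex {R : ℝ} {f : ℝ → ℝ} (hconv : ConvexOn ℝ (Set.Icc 0 R) f)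
    {Δ : ℝ} (hΔ : 0 ≤ Δ) {u w l : ℝ} (hu : u ∈ Set.Icc (0:ℝ) R) (hw : w ∈ Set.Icc (0:ℝ) R)
    (hl : 2 - Real.goldenRatio ≤ l) (hl1 : l ≤ 1)
    (hfw : f w - Δ ≤ f (l * u + (1 - l) * w)) :
    f (l * u + (1 - l) * w) ≤ f u + Real.goldenRatio * Δ := by
  have hφ2 : 0 < 2 - Real.goldenRatio := by linarith [Real.goldenRatio_lt_two]
  have hl0 : 0 < l := lt_of_lt_of_le hφ2 hl
  have hcv : f (l * u + (1 - l) * w) ≤ l * f u + (1 - l) * f w := by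
    have := hconv.2 hu hw hl0.le (show (0:ℝ) ≤ 1 - l by linarith)
      (show l + (1 - l) = 1 by ring)
    simpa using this
  set v := l * u + (1 - l) * w with hv
  have hmul : (1 - l) ≤ Real.goldenRatio * l := by nlinarith [Real.goldenRatio_sq]
  have h4 : (1 - l) * f w ≤ (1 - l) * (f v + Δ) :=
    mul_le_mul_of_nonneg_left (by linarith) (by linarith)
  have h6 : (1 - l) * Δ ≤ Real.goldenRatio * l * Δ := mul_le_mul_of_nonneg_right hmul hΔ
  have h7 : l * f v ≤ l * (f u + Real.goldenRatio * Δ) := by nlinarith [hcv, h4, h6]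
  exact le_of_mul_le_mul_left h7 hl0

/-- One step of the noisy golden ratio method, left part discarded. -/
lemma golden_step_left {R Δ : ℝ} {f : ℝ → ℝ} (hconv : ConvexOn ℝ (Set.Icc 0 R) f)
    (hΔ : 0 ≤ Δ) {A B x : ℝ} (hA0 : 0 ≤ A) (hAB : A < B) (hBR : B ≤ R)
    (hx : x ∈ Set.Icc A B)
    (hcmp : f (A + (B - A) / Real.goldenRatio) - Δ ≤ f (B - (B - A) / Real.goldenRatio)) :
    ∃ y ∈ Set.Icc (B - (B - A) / Real.goldenRatio) B, f y ≤ f x + Real.goldenRatio * Δ := by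
  have hφ1 : (1:ℝ) < Real.goldenRatio := Real.one_lt_goldenRatio
  have hφ0 : (0:ℝ) < Real.goldenRatio := Real.goldenRatio_pos
  have hφ2 : Real.goldenRatio < 2 := Real.goldenRatio_lt_two
  have hd : 0 < B - A := by linarith
  have hdφ : 0 < (B - A) / Real.goldenRatio := div_pos hd hφ0
  have hdφd : (B - A) / Real.goldenRatio < B - A := div_lt_self hd hφ1
  set s := B - (B - A) / Real.goldenRatio with hs
  set t := A + (B - A) / Real.goldenRatio with ht
  clear_value s t
  have hAs : A < s := by rw [hs]; linarith
  have htB : t < B := by rw [ht]; linarith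
  have hts : t - s = (2 - Real.goldenRatio) * ((B - A) / Real.goldenRatio) := by
    rw [hs, ht]; field_simp; ring
  have hst : s < t := by
    have : 0 < (2 - Real.goldenRatio) * ((B - A) / Real.goldenRatio) := mul_pos (by linarith) hdφ
    linarith [hts]
  have hΔφ : 0 ≤ Real.goldenRatio * Δ := mul_nonneg hφ0.le hΔ
  rcases le_or_gt s x with hsx | hxs
  · exact ⟨x, ⟨hsx, hx.2⟩, by linarith⟩
  · set l := (t - s) / (t - x) with hldef
    clear_value l
    have htx : 0 < t - x := by linarith
    have hl1 : l ≤ 1 := by rw [hldef, div_le_one htx]; linarith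
    have htxd : t - x ≤ (B - A) / Real.goldenRatio := by
      have := hx.1; rw [ht]; linarith
    have hlge : 2 - Real.goldenRatio ≤ l := by
      rw [hldef, le_div_iff₀ htx, hts]
      nlinarith
    have hveq : l * x + (1 - l) * t = s := by
      rw [hldef]; field_simp; ring
    have hxI : x ∈ Set.Icc (0:ℝ) R := ⟨le_trans hA0 hx.1, le_trans hx.2 hBR⟩
    have htI : t ∈ Set.Icc (0:ℝ) R := ⟨by rw [ht]; linarith, by linarith⟩
    have hkey := golden_key_convex hconv hΔ hxI htI hlge hl1 (by rw [hveq]; exact hcmp)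
    rw [hveq] at hkey
    exact ⟨s, ⟨le_refl s, by linarith⟩, by linarith⟩

/-- One step of the noisy golden ratio method, right part discarded. -/
lemma golden_step_right {R Δ : ℝ} {f : ℝ → ℝ} (hconv : ConvexOn ℝ (Set.Icc 0 R) f)
    (hΔ : 0 ≤ Δ) {A B x : ℝ} (hA0 : 0 ≤ A) (hAB : A < B) (hBR : B ≤ R)
    (hx : x ∈ Set.Icc A B)
    (hcmp : f (B - (B - A) / Real.goldenRatio) - Δ ≤ f (A + (B - A) / Real.goldenRatio)) :
    ∃ y ∈ Set.Icc A (A + (B - A) / Real.goldenRatio), f y ≤ f x + Real.goldenRatio * Δ := by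
  have hφ1 : (1:ℝ) < Real.goldenRatio := Real.one_lt_goldenRatio
  have hφ0 : (0:ℝ) < Real.goldenRatio := Real.goldenRatio_pos
  have hφ2 : Real.goldenRatio < 2 := Real.goldenRatio_lt_two
  have hd : 0 < B - A := by linarith
  have hdφ : 0 < (B - A) / Real.goldenRatio := div_pos hd hφ0
  have hdφd : (B - A) / Real.goldenRatio < B - A := div_lt_self hd hφ1
  set s := B - (B - A) / Real.goldenRatio with hs
  set t := A + (B - A) / Real.goldenRatio with ht
  clear_value s t
  have hAs : A < s := by rw [hs]; linarith
  have htB : t < B := by rw [ht]; linarith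
  have hts : t - s = (2 - Real.goldenRatio) * ((B - A) / Real.goldenRatio) := by
    rw [hs, ht]; field_simp; ring
  have hst : s < t := by
    have : 0 < (2 - Real.goldenRatio) * ((B - A) / Real.goldenRatio) := mul_pos (by linarith) hdφ
    linarith [hts]
  have hΔφ : 0 ≤ Real.goldenRatio * Δ := mul_nonneg hφ0.le hΔ
  rcases le_or_gt x t with hxt | htx
  · exact ⟨x, ⟨hx.1, hxt⟩, by linarith⟩
  · set l := (t - s) / (x - s) with hldef
    clear_value l
    have hxs : 0 < x - s := by linarith
    have hl1 : l ≤ 1 := by rw [hldef, div_le_one hxs]; linarith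
    have hxsd : x - s ≤ (B - A) / Real.goldenRatio := by
      have := hx.2; rw [hs]; linarith
    have hlge : 2 - Real.goldenRatio ≤ l := by
      rw [hldef, le_div_iff₀ hxs, hts]
      nlinarith
    have hveq : l * x + (1 - l) * s = t := by
      rw [hldef]; field_simp; ring
    have hxI : x ∈ Set.Icc (0:ℝ) R := ⟨le_trans hA0 hx.1, le_trans hx.2 hBR⟩
    have hsI : s ∈ Set.Icc (0:ℝ) R := ⟨by rw [hs]; linarith, by linarith⟩
    have hkey := golden_key_convex hconv hΔ hxI hsI hlge hl1 (by rw [hveq]; exact hcmp)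
    rw [hveq] at hkey
    exact ⟨t, ⟨by rw [ht]; linarith, le_refl t⟩, by linarith⟩

/-- Theorem 1: with `C = e·R·M·ln φ/(2φ)`, after `n₀ = log_φ(C/(e·Δ))` iterations of the
noisy golden ratio method, the midpoint of the remaining interval has error at most
`φ·Δ·log_φ(C/Δ)` in function value. -/
theorem golden_ratio_method_accuracy (R M Δ : ℝ) (hR : 0 < R) (hM : 0 < M) (hΔ : 0 < Δ)
    (f : ℝ → ℝ) (hconv : ConvexOn ℝ (Set.Icc 0 R) f)
    (hlip : ∀ x ∈ Set.Icc (0 : ℝ) R, ∀ y ∈ Set.Icc (0 : ℝ) R, |f x - f y| ≤ M * |x - y|)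
    (C : ℝ) (hC : C = Real.exp 1 * R * M * Real.log Real.goldenRatio / (2 * Real.goldenRatio))
    (n₀ : ℕ) (hn₀ : (n₀ : ℝ) = Real.logb Real.goldenRatio (C / (Real.exp 1 * Δ)))
    (a b : ℕ → ℝ) (hrun : GoldenRatioRun f R Δ n₀ a b) :
    f ((a n₀ + b n₀) / 2) - sInf (f '' Set.Icc 0 R) ≤
      Real.goldenRatio * Δ * Real.logb Real.goldenRatio (C / Δ) := by
  obtain ⟨ha0, hb0, hstep⟩ := hrun
  have hφ1 : (1:ℝ) < Real.goldenRatio := Real.one_lt_goldenRatio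
  have hφ0 : (0:ℝ) < Real.goldenRatio := Real.goldenRatio_pos
  -- a minimizer of f on [0,R]
  have hfc : ContinuousOn f (Set.Icc 0 R) := by
    have : LipschitzOnWith ⟨M, hM.le⟩ f (Set.Icc 0 R) :=
      LipschitzOnWith.of_dist_le_mul (fun x hx y hy => by
        exact (by simpa [Real.dist_eq] using hlip x hx y hy : dist (f x) (f y) ≤ M * dist x y))
    exact this.continuousOn
  obtain ⟨x₀, hx₀mem, hx₀min⟩ :=
    isCompact_Icc.exists_isMinOn ⟨0, Set.left_mem_Icc.2 hR.le⟩ hfc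
  have hinf : sInf (f '' Set.Icc 0 R) = f x₀ :=
    IsLeast.csInf_eq ⟨Set.mem_image_of_mem f hx₀mem, by
      rintro _ ⟨y, hy, rfl⟩; exact isMinOn_iff.mp hx₀min y hy⟩
  -- main induction
  have key : ∀ k, k ≤ n₀ → (0 ≤ a k ∧ b k ≤ R ∧ b k - a k = R / Real.goldenRatio ^ k) ∧
      ∃ x ∈ Set.Icc (a k) (b k), f x ≤ f x₀ + k * (Real.goldenRatio * Δ) := by
    intro k
    induction k with
    | zero =>
      intro _
      refine ⟨⟨by rw [ha0], by rw [hb0], by simp [ha0, hb0]⟩, x₀, ?_, by simp⟩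
      rw [ha0, hb0]; exact hx₀mem
    | succ k ih =>
      intro hk
      obtain ⟨⟨hA0, hBR, hlen⟩, x, hx, hfx⟩ := ih (Nat.le_of_succ_le hk)
      have hAB : a k < b k := by
        have : (0:ℝ) < R / Real.goldenRatio ^ k := div_pos hR (pow_pos hφ0 k)
        linarith
      have hcast : ((k+1:ℕ):ℝ) * (Real.goldenRatio * Δ) = k * (Real.goldenRatio * Δ) + Real.goldenRatio * Δ := by
        push_cast; ring
      have hlen' : (b k - a k) / Real.goldenRatio = R / Real.goldenRatio ^ (k+1) := by
        rw [hlen, pow_succ, div_div]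
      rcases hstep k (Nat.lt_of_succ_le hk) with ⟨ha', hb', hcmp⟩ | ⟨ha', hb', hcmp⟩
      · obtain ⟨y, hy, hfy⟩ := golden_step_left hconv hΔ.le hA0 hAB hBR hx hcmp
        have hdφ : 0 < (b k - a k) / Real.goldenRatio := div_pos (by linarith) hφ0
        have hdφd : (b k - a k) / Real.goldenRatio < b k - a k := div_lt_self (by linarith) hφ1
        refine ⟨⟨?_, ?_, ?_⟩, y, ?_, ?_⟩
        · rw [ha']; linarith [hy.1, hy.2]
        · rw [hb']; exact hBR
        · rw [ha', hb', ← hlen']; ring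
        · rw [ha', hb']; exact hy
        · rw [hcast]; linarith
      · obtain ⟨y, hy, hfy⟩ := golden_step_right hconv hΔ.le hA0 hAB hBR hx hcmp
        have hdφ : 0 < (b k - a k) / Real.goldenRatio := div_pos (by linarith) hφ0
        have hdφd : (b k - a k) / Real.goldenRatio < b k - a k := div_lt_self (by linarith) hφ1
        refine ⟨⟨?_, ?_, ?_⟩, y, ?_, ?_⟩
        · rw [ha']; exact hA0
        · rw [hb']; linarith
        · rw [ha', hb', ← hlen']; ring
        · rw [ha', hb']; exact hy
        · rw [hcast]; linarith
  -- extract final data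
  obtain ⟨⟨hA0, hBR, hlen⟩, x, hx, hfx⟩ := key n₀ le_rfl
  have hpowpos : (0:ℝ) < R / Real.goldenRatio ^ n₀ := div_pos hR (pow_pos hφ0 n₀)
  have hab : a n₀ ≤ b n₀ := by linarith
  have hmI : (a n₀ + b n₀) / 2 ∈ Set.Icc (0:ℝ) R := ⟨by linarith, by linarith⟩
  have hxI : x ∈ Set.Icc (0:ℝ) R := ⟨le_trans hA0 hx.1, le_trans hx.2 hBR⟩
  have habs : |(a n₀ + b n₀) / 2 - x| ≤ (b n₀ - a n₀) / 2 := by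
    rw [abs_le]; exact ⟨by linarith [hx.2], by linarith [hx.1]⟩
  have hfm : f ((a n₀ + b n₀) / 2) ≤ f x + M * ((b n₀ - a n₀) / 2) := by
    have h1 := hlip ((a n₀ + b n₀) / 2) hmI x hxI
    have h2 : f ((a n₀ + b n₀) / 2) - f x ≤ |f ((a n₀ + b n₀) / 2) - f x| := le_abs_self _
    have h3 : M * |(a n₀ + b n₀) / 2 - x| ≤ M * ((b n₀ - a n₀) / 2) :=
      mul_le_mul_of_nonneg_left habs hM.le
    linarith
  -- arithmetic with logs
  have hL : 0 < Real.log Real.goldenRatio := Real.log_pos hφ1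
  have hCpos : 0 < C := by
    rw [hC]
    exact div_pos (mul_pos (mul_pos (mul_pos (Real.exp_pos 1) hR) hM) hL) (by positivity)
  have hpow : (Real.goldenRatio : ℝ) ^ n₀ = C / (Real.exp 1 * Δ) := by
    have h1 : (0:ℝ) < C / (Real.exp 1 * Δ) := div_pos hCpos (mul_pos (Real.exp_pos 1) hΔ)
    have h2 := Real.rpow_logb hφ0 (ne_of_gt hφ1) h1
    rw [← h2, ← hn₀, Real.rpow_natCast]
  have hlogb : Real.logb Real.goldenRatio (C / Δ) = (n₀ : ℝ) + 1 / Real.log Real.goldenRatio := by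
    rw [hn₀]
    have heq : C / (Real.exp 1 * Δ) = (C / Δ) / Real.exp 1 := by
      rw [div_div, mul_comm]
    rw [heq, Real.logb_div (ne_of_gt (div_pos hCpos hΔ)) (Real.exp_ne_zero 1)]
    have : Real.logb Real.goldenRatio (Real.exp 1) = 1 / Real.log Real.goldenRatio := by
      rw [Real.logb, Real.log_exp]
    rw [this]; ring
  have hmid : M * ((b n₀ - a n₀) / 2) = Real.goldenRatio * Δ / Real.log Real.goldenRatio := by
    rw [hlen, hpow, hC]
    have he : Real.exp 1 ≠ 0 := Real.exp_ne_zero 1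
    field_simp
  rw [hinf, hlogb]
  have hrhs : Real.goldenRatio * Δ * ((n₀ : ℝ) + 1 / Real.log Real.goldenRatio)
      = (n₀ : ℝ) * (Real.goldenRatio * Δ) + Real.goldenRatio * Δ / Real.log Real.goldenRatio := by
    field_simp
  linarith [hfm, hfx, hmid, hrhs]
end

section
/- Let R > 0, M > 0, Δ ≥ 0, let φ = (1+√5)/2 be the golden ratio, and let f : [0,R] → ℝ be convex and M-Lipschitz. Let n be any natural number and let (a_k)_{k=0}^{n}, (b_k)_{k=0}^{n} be a noisy golden-ratio-method run of length n for f with noise level Δ on [0,R]. Then the midpoint x₀ = (a_n + b_n)/2 satisfies f(x₀) − min_{x∈[0,R]} f(x) ≤ R·M/(2·φⁿ) + n·φ·Δ. -/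
/-- After `n` iterations of the noisy golden ratio method, the midpoint of the remaining
interval is an `R·M/(2·φⁿ) + n·φ·Δ`-approximate minimizer of `f` on `[0, R]`. -/
theorem golden_ratio_midpoint_error (R M Δ : ℝ) (hR : 0 < R) (hM : 0 < M) (hΔ : 0 ≤ Δ)
    (f : ℝ → ℝ) (hconv : ConvexOn ℝ (Set.Icc 0 R) f)
    (hlip : ∀ x ∈ Set.Icc (0 : ℝ) R, ∀ y ∈ Set.Icc (0 : ℝ) R, |f x - f y| ≤ M * |x - y|)
    (n : ℕ) (a b : ℕ → ℝ) (hrun : GoldenRatioRun f R Δ n a b) :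
    f ((a n + b n) / 2) - sInf (f '' Set.Icc 0 R) ≤
      R * M / (2 * Real.goldenRatio ^ n) + n * Real.goldenRatio * Δ := by
  obtain ⟨ha0, hb0, hstep⟩ := hrun
  have hφ1 : 1 < Real.goldenRatio := Real.one_lt_goldenRatio
  have hφ0 : 0 < Real.goldenRatio := Real.goldenRatio_pos
  have hφ2 : Real.goldenRatio ^ 2 = Real.goldenRatio + 1 := Real.goldenRatio_sq
  have hφ3 : 3 < 2 * Real.goldenRatio := by
    have h5 : (2:ℝ) < Real.sqrt 5 := by
      nlinarith [Real.sq_sqrt (by norm_num : (5:ℝ) ≥ 0), Real.sqrt_nonneg 5]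
    rw [Real.goldenRatio]; linarith
  have hφinv : 1 / Real.goldenRatio = Real.goldenRatio - 1 := by
    rw [div_eq_iff hφ0.ne']; nlinarith
  -- convexity three-point inequality
  have hconv3 : ∀ p ∈ Set.Icc (0:ℝ) R, ∀ r ∈ Set.Icc (0:ℝ) R, ∀ q : ℝ, p < q → q < r →
      (r - p) * f q ≤ (r - q) * f p + (q - p) * f r := by
    intro p hp r hr q hpq hqr
    have hrp : (0:ℝ) < r - p := by linarith
    have h1 : (0:ℝ) ≤ (r - q)/(r - p) := div_nonneg (by linarith) hrp.le
    have h2 : (0:ℝ) ≤ (q - p)/(r - p) := div_nonneg (by linarith) hrp.le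
    have hsum : (r - q)/(r - p) + (q - p)/(r - p) = 1 := by
      rw [← add_div]
      rw [div_eq_one_iff_eq hrp.ne']
      ring
    have hcomb := hconv.2 hp hr h1 h2 hsum
    have hq : ((r - q)/(r - p)) • p + ((q - p)/(r - p)) • r = q := by
      simp only [smul_eq_mul]
      rw [div_mul_eq_mul_div, div_mul_eq_mul_div, ← add_div,
        div_eq_iff hrp.ne']
      ring
    rw [hq, smul_eq_mul, smul_eq_mul] at hcomb
    have hmul := mul_le_mul_of_nonneg_left hcomb hrp.le
    calc (r - p) * f q
        ≤ (r - p) * ((r - q)/(r - p) * f p + (q - p)/(r - p) * f r) := hmul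
      _ = (r - q)/(r - p) * (r - p) * f p + (q - p)/(r - p) * (r - p) * f r := by ring
      _ = (r - q) * f p + (q - p) * f r := by
          rw [div_mul_cancel₀ _ hrp.ne', div_mul_cancel₀ _ hrp.ne']
  -- main invariant
  have key : ∀ k, k ≤ n → 0 ≤ a k ∧ b k ≤ R ∧ b k - a k = R / Real.goldenRatio ^ k ∧
      ∀ x ∈ Set.Icc (0:ℝ) R, ∃ y ∈ Set.Icc (a k) (b k), f y ≤ f x + k * Real.goldenRatio * Δ := by
    intro k
    induction k with
    | zero =>
      intro _
      refine ⟨by rw [ha0], by rw [hb0], by rw [ha0, hb0]; simp, ?_⟩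
      intro x hx
      exact ⟨x, by rw [ha0, hb0]; exact hx, by simp⟩
    | succ k ih =>
      intro hk
      obtain ⟨hak, hbk, hL, hmin⟩ := ih (Nat.le_of_succ_le hk)
      set L : ℝ := b k - a k with hLdef
      have hLpos : 0 < L := by rw [hL]; positivity
      have hLφeq : L / Real.goldenRatio = L * (Real.goldenRatio - 1) := by
        rw [div_eq_mul_one_div, hφinv]
      set s : ℝ := b k - L / Real.goldenRatio with hsdef
      set t : ℝ := a k + L / Real.goldenRatio with htdef
      clear_value L s t
      have hLφ : 0 < L / Real.goldenRatio := div_pos hLpos hφ0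
      have hLφL : L / Real.goldenRatio < L := div_lt_self hLpos hφ1
      have hst : s < t := by
        simp only [hsdef, htdef, hLφeq]; nlinarith
      have has : a k < s := by simp only [hsdef]; linarith
      have htb : t < b k := by simp only [htdef]; linarith
      have hsI : s ∈ Set.Icc (0:ℝ) R := ⟨by linarith, by linarith⟩
      have htI : t ∈ Set.Icc (0:ℝ) R := ⟨by linarith, by linarith⟩
      have hLnew : L / Real.goldenRatio = R / Real.goldenRatio ^ (k+1) := by
        rw [hL, pow_succ, div_div]
      -- φ * (t - s) = s - a k  and  = b k - t
      have hkey1 : Real.goldenRatio * (t - s) = s - a k := by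
        simp only [hsdef, htdef, hLφeq]
        linear_combination (2*L) * hφ2 + (Real.goldenRatio + 1) * hLdef
      have hkey2 : Real.goldenRatio * (t - s) = b k - t := by
        simp only [hsdef, htdef, hLφeq]
        linear_combination (2*L) * hφ2 + (Real.goldenRatio + 1) * hLdef
      rcases hstep k (Nat.lt_of_succ_le hk) with ⟨hA, hB, hF⟩ | ⟨hA, hB, hF⟩
      · -- discard left: new interval [s, b k]
        simp only [← hLdef, ← hsdef, ← htdef] at hA hB hF
        refine ⟨by rw [hA]; linarith, by rw [hB]; exact hbk,
          by rw [hA, hB]; simp only [hsdef]; linarith [hLnew], ?_⟩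
        intro x hx
        obtain ⟨y, hy, hfy⟩ := hmin x hx
        rw [hA, hB]
        have hφΔ : 0 ≤ Real.goldenRatio * Δ := mul_nonneg hφ0.le hΔ
        have hcast : ((k:ℝ) + 1) * Real.goldenRatio * Δ = k * Real.goldenRatio * Δ + Real.goldenRatio * Δ := by ring
        by_cases hys : s ≤ y
        · refine ⟨y, ⟨hys, hy.2⟩, ?_⟩
          push_cast
          rw [hcast]; linarith
        · push_neg at hys
          have hyI : y ∈ Set.Icc (0:ℝ) R := ⟨by linarith [hy.1], by linarith [hy.2]⟩
          have h3 := hconv3 y hyI t htI s hys hst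
          have hft : f t ≤ f s + Δ := by linarith [hF]
          have hs_y : s - y ≤ Real.goldenRatio * (t - s) := by
            rw [hkey1]; linarith [hy.1]
          have hts : 0 < t - s := by linarith
          have e1 : (s - y) * f t ≤ (s - y) * (f s + Δ) :=
            mul_le_mul_of_nonneg_left hft (by linarith)
          have hq1 : (t - s) * (f s - f y) ≤ (s - y) * Δ := by linarith only [h3, e1]
          have e2 : (s - y) * Δ ≤ (t - s) * (Real.goldenRatio * Δ) := by
            linarith only [mul_le_mul_of_nonneg_right hs_y hΔ]
          have e3 : (t - s) * (f s - f y) ≤ (t - s) * (Real.goldenRatio * Δ) := le_trans hq1 e2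
          have hfs : f s - f y ≤ Real.goldenRatio * Δ := le_of_mul_le_mul_left e3 hts
          refine ⟨s, ⟨le_refl s, by linarith⟩, ?_⟩
          push_cast
          rw [hcast]; linarith
      · -- discard right: new interval [a k, t]
        simp only [← hLdef, ← hsdef, ← htdef] at hA hB hF
        refine ⟨by rw [hA]; exact hak, by rw [hB]; linarith,
          by rw [hA, hB]; simp only [htdef]; linarith [hLnew], ?_⟩
        intro x hx
        obtain ⟨y, hy, hfy⟩ := hmin x hx
        rw [hA, hB]
        have hφΔ : 0 ≤ Real.goldenRatio * Δ := mul_nonneg hφ0.le hΔ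
        have hcast : ((k:ℝ) + 1) * Real.goldenRatio * Δ = k * Real.goldenRatio * Δ + Real.goldenRatio * Δ := by ring
        by_cases hyt : y ≤ t
        · refine ⟨y, ⟨hy.1, hyt⟩, ?_⟩
          push_cast
          rw [hcast]; linarith
        · push_neg at hyt
          have hyI : y ∈ Set.Icc (0:ℝ) R := ⟨by linarith [hy.1], by linarith [hy.2]⟩
          have h3 := hconv3 s hsI y hyI t hst hyt
          have hfs : f s ≤ f t + Δ := by linarith [hF]
          have hy_t : y - t ≤ Real.goldenRatio * (t - s) := by
            rw [hkey2]; linarith [hy.2]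
          have hts : 0 < t - s := by linarith
          have e1 : (y - t) * f s ≤ (y - t) * (f t + Δ) :=
            mul_le_mul_of_nonneg_left hfs (by linarith)
          have hq1 : (t - s) * (f t - f y) ≤ (y - t) * Δ := by linarith only [h3, e1]
          have e2 : (y - t) * Δ ≤ (t - s) * (Real.goldenRatio * Δ) := by
            linarith only [mul_le_mul_of_nonneg_right hy_t hΔ]
          have e3 : (t - s) * (f t - f y) ≤ (t - s) * (Real.goldenRatio * Δ) := le_trans hq1 e2
          have hft : f t - f y ≤ Real.goldenRatio * Δ := le_of_mul_le_mul_left e3 hts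
          refine ⟨t, ⟨by linarith, le_refl t⟩, ?_⟩
          push_cast
          rw [hcast]; linarith
  obtain ⟨han, hbn, hLn, hminn⟩ := key n le_rfl
  have hLpos : 0 < b n - a n := by rw [hLn]; positivity
  set m : ℝ := (a n + b n) / 2 with hmdef
  have hmI : m ∈ Set.Icc (0:ℝ) R :=
    ⟨by simp only [hmdef]; linarith, by simp only [hmdef]; linarith⟩
  have hbound : ∀ x ∈ Set.Icc (0:ℝ) R,
      f m ≤ f x + (R * M / (2 * Real.goldenRatio ^ n) + n * Real.goldenRatio * Δ) := by
    intro x hx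
    obtain ⟨y, hy, hfy⟩ := hminn x hx
    have hyI : y ∈ Set.Icc (0:ℝ) R := ⟨by linarith [hy.1], by linarith [hy.2]⟩
    have hdist : |m - y| ≤ (b n - a n) / 2 := by
      rw [abs_le]
      constructor <;> simp only [hmdef] <;> [linarith [hy.2]; linarith [hy.1]]
    have hlb := hlip m hmI y hyI
    have h1 : f m - f y ≤ M * |m - y| := le_trans (le_abs_self _) hlb
    have h2 : M * |m - y| ≤ M * ((b n - a n) / 2) :=
      mul_le_mul_of_nonneg_left hdist hM.le
    have h3 : M * ((b n - a n) / 2) = R * M / (2 * Real.goldenRatio ^ n) := by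
      rw [hLn, div_div, mul_comm (Real.goldenRatio ^ n) 2, ← mul_div_assoc, mul_comm M R]
    linarith
  rw [sub_le_comm]
  refine le_csInf ⟨f 0, Set.mem_image_of_mem f (by constructor <;> simp [hR.le])⟩ ?_
  rintro z ⟨x, hx, rfl⟩
  linarith [hbound x hx]
end

section
/- Let R > 0, Δ ≥ 0, let φ = (1+√5)/2 be the golden ratio, and let f : [0,R] → ℝ be convex and continuous. Let n be any natural number and let (a_k)_{k=0}^{n}, (b_k)_{k=0}^{n} be a noisy golden-ratio-method run of length n for f with noise level Δ on [0,R]. Then min_{x∈[a_n, b_n]} f(x) ≤ min_{x∈[0,R]} f(x) + n·φ·Δ. -/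
/-- Three-point convexity estimate: if `x < s < t`, `f t ≤ f s + Δ` and
`s - x ≤ g (t - s)`, then `f s ≤ f x + g Δ`. -/
lemma gr_conv_left (R Δ g : ℝ) (hΔ : 0 ≤ Δ) (hg : 0 < g)
    (f : ℝ → ℝ) (hconv : ConvexOn ℝ (Set.Icc 0 R) f)
    (x s t : ℝ) (hx : x ∈ Set.Icc (0:ℝ) R) (ht : t ∈ Set.Icc (0:ℝ) R)
    (hxs : x < s) (hst : s < t) (hkey : s - x ≤ g * (t - s))
    (h : f t ≤ f s + Δ) : f s ≤ f x + g * Δ := by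
  have htx : 0 < t - x := by linarith
  set μ := (s - x) / (t - x) with hμ
  have h2 : μ * (t - x) = s - x := div_mul_cancel₀ _ (ne_of_gt htx)
  have hμ0 : 0 ≤ μ := div_nonneg (by linarith) htx.le
  have hμ1 : μ ≤ 1 := by rw [hμ, div_le_one htx]; linarith
  have hcvx := hconv.2 hx ht (by linarith : (0:ℝ) ≤ 1 - μ) hμ0 (by ring)
  simp only [smul_eq_mul] at hcvx
  have hcomb : (1 - μ) * x + μ * t = s := by linear_combination h2
  rw [hcomb] at hcvx
  have h3 : (1 - μ) * (t - x) = t - s := by linear_combination -h2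
  have hμφ : μ ≤ g * (1 - μ) := by nlinarith [h2, h3]
  have hl0 : 0 < 1 - μ := by nlinarith [h3, htx]
  have h1 : (1 - μ) * f s ≤ (1 - μ) * f x + μ * Δ := by
    nlinarith [mul_le_mul_of_nonneg_left h hμ0]
  nlinarith [mul_le_mul_of_nonneg_right hμφ hΔ]

/-- Mirror three-point convexity estimate: if `s < t < x`, `f s ≤ f t + Δ` and
`x - t ≤ g (t - s)`, then `f t ≤ f x + g Δ`. -/
lemma gr_conv_right (R Δ g : ℝ) (hΔ : 0 ≤ Δ) (hg : 0 < g)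
    (f : ℝ → ℝ) (hconv : ConvexOn ℝ (Set.Icc 0 R) f)
    (x s t : ℝ) (hx : x ∈ Set.Icc (0:ℝ) R) (hs : s ∈ Set.Icc (0:ℝ) R)
    (hst : s < t) (htx : t < x) (hkey : x - t ≤ g * (t - s))
    (h : f s ≤ f t + Δ) : f t ≤ f x + g * Δ := by
  have hxs : 0 < x - s := by linarith
  set μ := (t - s) / (x - s) with hμ
  have h2 : μ * (x - s) = t - s := div_mul_cancel₀ _ (ne_of_gt hxs)
  have hμ0 : 0 ≤ μ := div_nonneg (by linarith) hxs.le
  have hμ1 : μ ≤ 1 := by rw [hμ, div_le_one hxs]; linarith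
  have hcvx := hconv.2 hs hx (by linarith : (0:ℝ) ≤ 1 - μ) hμ0 (by ring)
  simp only [smul_eq_mul] at hcvx
  have hcomb : (1 - μ) * s + μ * x = t := by linear_combination h2
  rw [hcomb] at hcvx
  have h3 : (1 - μ) * (x - s) = x - t := by linear_combination -h2
  have hμφ : 1 - μ ≤ g * μ := by nlinarith [h2, h3]
  have hμpos : 0 < μ := by nlinarith [h2, hxs]
  have h1 : μ * f t ≤ μ * f x + (1 - μ) * Δ := by
    nlinarith [mul_le_mul_of_nonneg_left h (by linarith : (0:ℝ) ≤ 1 - μ)]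
  nlinarith [mul_le_mul_of_nonneg_right hμφ hΔ]

/-- Basic geometry of one golden-section step. -/
lemma gr_step_facts (a b : ℝ) (hab : a < b) :
    a < b - (b - a) / Real.goldenRatio ∧
    b - (b - a) / Real.goldenRatio < a + (b - a) / Real.goldenRatio ∧
    a + (b - a) / Real.goldenRatio < b ∧
    (b - (b - a) / Real.goldenRatio) - a
      = Real.goldenRatio * ((a + (b - a) / Real.goldenRatio) - (b - (b - a) / Real.goldenRatio)) := by
  have hg1 : (1:ℝ) < Real.goldenRatio := Real.one_lt_goldenRatio
  have hg2 : Real.goldenRatio < 2 := Real.goldenRatio_lt_two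
  have hg0 : (0:ℝ) < Real.goldenRatio := Real.goldenRatio_pos
  have hgsq : Real.goldenRatio * Real.goldenRatio = Real.goldenRatio + 1 := by
    have h := Real.goldenRatio_sq; rwa [pow_two] at h
  set g := Real.goldenRatio
  have hd : 0 < b - a := by linarith
  set c := (b - a) / g with hc
  have hcg : c * g = b - a := by rw [hc]; exact div_mul_cancel₀ _ hg0.ne'
  have hc0 : 0 < c := div_pos hd hg0
  refine ⟨by nlinarith, by nlinarith, by nlinarith, by nlinarith⟩

/-- The intervals of a run stay inside `[0, R]` and are nondegenerate. -/
lemma gr_invariant (f : ℝ → ℝ) (R Δ : ℝ) (hR : 0 < R) (n : ℕ) (a b : ℕ → ℝ)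
    (hrun : GoldenRatioRun f R Δ n a b) :
    ∀ k, k ≤ n → 0 ≤ a k ∧ b k ≤ R ∧ a k < b k := by
  intro k
  induction k with
  | zero => intro _; rw [hrun.1, hrun.2.1]; exact ⟨le_refl 0, le_refl R, hR⟩
  | succ k ih =>
    intro hk
    have hk' : k < n := lt_of_lt_of_le (Nat.lt_succ_self k) hk
    obtain ⟨h0, hR', hab⟩ := ih hk'.le
    obtain ⟨has, hst, htb, _⟩ := gr_step_facts (a k) (b k) hab
    rcases hrun.2.2 k hk' with ⟨ha', hb', _⟩ | ⟨ha', hb', _⟩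
    · rw [ha', hb']; exact ⟨by linarith, hR', by linarith⟩
    · rw [ha', hb']; exact ⟨h0, by linarith, by linarith⟩

/-- After `n` iterations of the noisy golden ratio method, the minimum of `f` over the
remaining interval `[a n, b n]` exceeds the minimum over `[0, R]` by at most `n·φ·Δ`. -/
theorem golden_ratio_min_increase (R Δ : ℝ) (hR : 0 < R) (hΔ : 0 ≤ Δ)
    (f : ℝ → ℝ) (hconv : ConvexOn ℝ (Set.Icc 0 R) f)
    (hcont : ContinuousOn f (Set.Icc 0 R))
    (n : ℕ) (a b : ℕ → ℝ) (hrun : GoldenRatioRun f R Δ n a b) :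
    sInf (f '' Set.Icc (a n) (b n)) ≤ sInf (f '' Set.Icc 0 R) + n * Real.goldenRatio * Δ := by
  induction n with
  | zero => simp [hrun.1, hrun.2.1]
  | succ n ih =>
    have hrun' : GoldenRatioRun f R Δ n a b :=
      ⟨hrun.1, hrun.2.1, fun k hk => hrun.2.2 k (hk.trans (Nat.lt_succ_self n))⟩
    have ihn := ih hrun'
    obtain ⟨h0, hRn, habn⟩ := gr_invariant f R Δ hR (n+1) a b hrun n (Nat.le_succ n)
    obtain ⟨h0', hR'', hab'⟩ := gr_invariant f R Δ hR (n+1) a b hrun (n+1) le_rfl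
    have hsub : Set.Icc (a n) (b n) ⊆ Set.Icc (0:ℝ) R := Set.Icc_subset_Icc h0 hRn
    have hsub' : Set.Icc (a (n+1)) (b (n+1)) ⊆ Set.Icc (0:ℝ) R :=
      Set.Icc_subset_Icc h0' hR''
    have hne : (Set.Icc (a n) (b n)).Nonempty := Set.nonempty_Icc.2 habn.le
    have hcpt : IsCompact (f '' Set.Icc (a n) (b n)) :=
      isCompact_Icc.image_of_continuousOn (hcont.mono hsub)
    obtain ⟨x, hxmem, hfx⟩ := hcpt.sInf_mem (hne.image f)
    have hbdd : BddBelow (f '' Set.Icc (a (n+1)) (b (n+1))) :=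
      (isCompact_Icc.image_of_continuousOn (hcont.mono hsub')).bddBelow
    obtain ⟨has, hst, htb, hkey⟩ := gr_step_facts (a n) (b n) habn
    set s := b n - (b n - a n) / Real.goldenRatio with hs
    set t := a n + (b n - a n) / Real.goldenRatio with ht
    obtain ⟨hxa, hxb⟩ := hxmem
    have hfysInf : ∃ y ∈ Set.Icc (a (n+1)) (b (n+1)), f y ≤ f x + Real.goldenRatio * Δ := by
      rcases hrun.2.2 n (Nat.lt_succ_self n) with ⟨ha', hb', hineq⟩ | ⟨ha', hb', hineq⟩ <;>
        rw [← hs, ← ht] at hineq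
      · -- left part discarded: new interval [s, b n]
        by_cases hxs : s ≤ x
        · exact ⟨x, by rw [ha', hb']; exact ⟨hxs, hxb⟩,
            by nlinarith [Real.goldenRatio_pos]⟩
        · push_neg at hxs
          refine ⟨s, by rw [ha', hb']; exact ⟨le_rfl, by linarith⟩, ?_⟩
          exact gr_conv_left R Δ Real.goldenRatio hΔ Real.goldenRatio_pos f hconv x s t
            ⟨by linarith, by linarith⟩ ⟨by linarith, by linarith⟩
            hxs hst (by linarith) (by linarith)
      · -- right part discarded: new interval [a n, t]
        by_cases hxt : x ≤ t
        · exact ⟨x, by rw [ha', hb']; exact ⟨hxa, hxt⟩,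
            by nlinarith [Real.goldenRatio_pos]⟩
        · push_neg at hxt
          refine ⟨t, by rw [ha', hb']; exact ⟨by linarith, le_rfl⟩, ?_⟩
          have hbt : b n - t = s - a n := by rw [hs, ht]; ring
          exact gr_conv_right R Δ Real.goldenRatio hΔ Real.goldenRatio_pos f hconv x s t
            ⟨by linarith, by linarith⟩ ⟨by linarith, by linarith⟩
            hst hxt (by linarith) (by linarith)
    obtain ⟨y, hy, hfy⟩ := hfysInf
    have h5 : sInf (f '' Set.Icc (a (n+1)) (b (n+1))) ≤ f y := csInf_le hbdd ⟨y, hy, rfl⟩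
    have hcast : ((n+1:ℕ):ℝ) * Real.goldenRatio * Δ = n * Real.goldenRatio * Δ + Real.goldenRatio * Δ := by
      push_cast; ring
    rw [hcast]
    linarith [hfx ▸ hfy]
end

section
/- Let L > 0, δ ≥ 0, r > 0, and let f : ℝ² → ℝ be convex and differentiable with L-Lipschitz gradient (with respect to the Euclidean norm). Let K = [a₁, a₁+r] × [a₂, a₂+r] be an axis-aligned square, and let l₁ = { (x, a₂ + r/2) : x ∈ [a₁, a₁+r] } be its horizontal midline. Let x₀ be a point of the relative interior of l₁ at which f attains its minimum over l₁, and let x_δ ∈ l₁ satisfy ‖x_δ − x₀‖ ≤ δ. Let l₂ = { ((x_δ)₁, y) : y ∈ [a₂, a₂+r] } be the vertical segment through x_δ spanning K, let x'₀ be a point of the relative interior of l₂ at which f attains its minimum over l₂, and let x'_δ ∈ l₂ satisfy ‖x'_δ − x'₀‖ ≤ δ. Let Q be whichever of the two closed half-rectangles [a₁, a₁+r] × [a₂, a₂+r/2] and [a₁, a₁+r] × [a₂+r/2, a₂+r] contains x'_δ. Then min_{x∈Q} f(x) − min_{x∈K} f(x) ≤ L·δ·r·√10/2. -/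
open Set
open scoped RealInnerProductSpace

section SqHelpers

variable {f : EuclideanSpace ℝ (Fin 2) → ℝ}

lemma sq_line_hasDerivAt (hdiff : Differentiable ℝ f) (x v : EuclideanSpace ℝ (Fin 2)) (t : ℝ) :
    HasDerivAt (fun s : ℝ => f (x + s • v)) ⟪gradient f (x + t • v), v⟫ t := by
  have hc : HasDerivAt (fun s : ℝ => x + s • v) v t := by
    simpa using ((hasDerivAt_id t).smul_const v).const_add x
  have hf := (hasGradientAt_iff_hasFDerivAt.mp (hdiff (x + t • v)).hasGradientAt)
  have h2 := hf.comp_hasDerivAt t hc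
  simpa [InnerProductSpace.toDual_apply_apply, Function.comp_def] using h2

lemma sq_first_order (hconv : ConvexOn ℝ Set.univ f) (hdiff : Differentiable ℝ f)
    (x y : EuclideanSpace ℝ (Fin 2)) :
    f x + ⟪gradient f x, y - x⟫ ≤ f y := by
  have hφconv : ConvexOn ℝ Set.univ (fun t : ℝ => f (x + t • (y - x))) := by
    have := hconv.comp_affineMap (AffineMap.lineMap x y)
    simp only [Set.preimage_univ] at this
    have e : (fun t : ℝ => f (x + t • (y - x))) = f ∘ AffineMap.lineMap x y := by
      funext t
      simp [AffineMap.lineMap_apply, add_comm]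
    rw [e]; exact this
  have hd : HasDerivAt (fun t : ℝ => f (x + t • (y - x))) ⟪gradient f x, y - x⟫ 0 := by
    have := sq_line_hasDerivAt hdiff x (y - x) 0
    simpa using this
  have hs := hφconv.le_slope_of_hasDerivAt (mem_univ (0:ℝ)) (mem_univ 1) one_pos hd
  rw [slope_def_field] at hs
  simp only [zero_smul, add_zero, one_smul, add_sub_cancel, sub_zero, div_one] at hs
  linarith

lemma sq_grad_mono (hconv : ConvexOn ℝ Set.univ f) (hdiff : Differentiable ℝ f)
    (x y : EuclideanSpace ℝ (Fin 2)) :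
    0 ≤ ⟪gradient f x - gradient f y, x - y⟫ := by
  have h1 := sq_first_order hconv hdiff x y
  have h2 := sq_first_order hconv hdiff y x
  have e1 : ⟪gradient f x, x - y⟫ = -⟪gradient f x, y - x⟫ := by
    rw [← inner_neg_right, neg_sub]
  rw [inner_sub_left, e1]
  linarith

lemma sq_min_dirderiv_zero (hdiff : Differentiable ℝ f)
    {s : Set (EuclideanSpace ℝ (Fin 2))} {x : EuclideanSpace ℝ (Fin 2)}
    (hmin : IsMinOn f s x) (v : EuclideanSpace ℝ (Fin 2)) {ε : ℝ} (hε : 0 < ε)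
    (hmem : ∀ t : ℝ, |t| < ε → x + t • v ∈ s) :
    ⟪gradient f x, v⟫ = 0 := by
  have hloc : IsLocalMin (fun t : ℝ => f (x + t • v)) 0 := by
    have h0 : ∀ᶠ t : ℝ in nhds 0, f (x + (0:ℝ) • v) ≤ f (x + t • v) := by
      filter_upwards [Metric.ball_mem_nhds (0:ℝ) hε] with t ht
      have hts : x + t • v ∈ s := hmem t (by simpa [Real.dist_eq] using ht)
      simpa using isMinOn_iff.mp hmin _ hts
    exact h0
  have hd := sq_line_hasDerivAt hdiff x v 0
  exact hloc.hasDerivAt_eq_zero (by simpa using hd)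

lemma sq_inner_two (g u : EuclideanSpace ℝ (Fin 2)) : ⟪g, u⟫ = g 0 * u 0 + g 1 * u 1 := by
  simp [PiLp.inner_apply, RCLike.inner_apply, Fin.sum_univ_two]
  ring

lemma sq_abs_coord_le (u : EuclideanSpace ℝ (Fin 2)) (i : Fin 2) : |u i| ≤ ‖u‖ := by
  have h : |u i| = Real.sqrt (‖u i‖ ^ 2) := by
    rw [Real.sqrt_sq_eq_abs]; simp [Real.norm_eq_abs, abs_abs]
  rw [h, EuclideanSpace.norm_eq]
  apply Real.sqrt_le_sqrt
  rw [Fin.sum_univ_two]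
  fin_cases i <;> simp <;> positivity

lemma sq_norm_snd (u : EuclideanSpace ℝ (Fin 2)) (h : u 0 = 0) : ‖u‖ = |u 1| := by
  rw [EuclideanSpace.norm_eq, Fin.sum_univ_two, h]
  simp [Real.norm_eq_abs, Real.sqrt_sq_eq_abs]

end SqHelpers

/-- The closed axis-aligned rectangle `[a₁, a₁+w] × [a₂, a₂+h]` in the Euclidean plane. -/
def rect2 (a₁ a₂ w h : ℝ) : Set (EuclideanSpace ℝ (Fin 2)) :=
  {x | x 0 ∈ Set.Icc a₁ (a₁ + w) ∧ x 1 ∈ Set.Icc a₂ (a₂ + h)}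

lemma rect2_isCompact (a₁ a₂ w h : ℝ) : IsCompact (rect2 a₁ a₂ w h) := by
  have hset : rect2 a₁ a₂ w h =
      (EuclideanSpace.equiv (Fin 2) ℝ).toHomeomorph ⁻¹'
        (Set.univ.pi ![Icc a₁ (a₁ + w), Icc a₂ (a₂ + h)]) := by
    ext x
    simp [rect2, Set.mem_pi, Fin.forall_fin_two]
  rw [hset, Homeomorph.isCompact_preimage]
  exact isCompact_univ_pi (by intro i; fin_cases i <;> simp [isCompact_Icc])

set_option maxHeartbeats 1200000 in
/-- Square-to-rectangle step: `x₀` is an (interior) minimizer of `f` on the horizontal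
midline `l₁` of the square `K = [a₁,a₁+r] × [a₂,a₂+r]`, `x_δ ∈ l₁` is `δ`-close to it,
`x'₀` is an (interior) minimizer of `f` on the vertical segment `l₂` through `x_δ`, and
`x'_δ ∈ l₂` is `δ`-close to it. If `Q` is the closed half-rectangle of `K` containing
`x'_δ`, then `min_Q f − min_K f ≤ L·δ·r·√10/2`. -/
theorem square_to_rectangle_min_increase (L δ r : ℝ) (hL : 0 < L) (hδ : 0 ≤ δ)
    (hr : 0 < r) (a₁ a₂ : ℝ) (f : EuclideanSpace ℝ (Fin 2) → ℝ)
    (hconv : ConvexOn ℝ Set.univ f) (hdiff : Differentiable ℝ f)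
    (hgrad : ∀ x y, ‖gradient f x - gradient f y‖ ≤ L * ‖x - y‖)
    (l₁ : Set (EuclideanSpace ℝ (Fin 2)))
    (hl₁ : l₁ = {x | x 0 ∈ Set.Icc a₁ (a₁ + r) ∧ x 1 = a₂ + r / 2})
    (x₀ : EuclideanSpace ℝ (Fin 2))
    (hx₀int : x₀ 0 ∈ Set.Ioo a₁ (a₁ + r) ∧ x₀ 1 = a₂ + r / 2)
    (hx₀min : IsMinOn f l₁ x₀)
    (xδ : EuclideanSpace ℝ (Fin 2)) (hxδ : xδ ∈ l₁) (hxδclose : ‖xδ - x₀‖ ≤ δ)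
    (l₂ : Set (EuclideanSpace ℝ (Fin 2)))
    (hl₂ : l₂ = {x | x 0 = xδ 0 ∧ x 1 ∈ Set.Icc a₂ (a₂ + r)})
    (x₀' : EuclideanSpace ℝ (Fin 2))
    (hx₀'int : x₀' 0 = xδ 0 ∧ x₀' 1 ∈ Set.Ioo a₂ (a₂ + r))
    (hx₀'min : IsMinOn f l₂ x₀')
    (xδ' : EuclideanSpace ℝ (Fin 2)) (hxδ' : xδ' ∈ l₂) (hxδ'close : ‖xδ' - x₀'‖ ≤ δ)
    (Q : Set (EuclideanSpace ℝ (Fin 2)))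
    (hQhalf : Q = rect2 a₁ a₂ r (r / 2) ∨ Q = rect2 a₁ (a₂ + r / 2) r (r / 2))
    (hQmem : xδ' ∈ Q) :
    sInf (f '' Q) - sInf (f '' rect2 a₁ a₂ r r) ≤ L * δ * r * Real.sqrt 10 / 2 := by
  obtain ⟨hxδ0, hxδ1⟩ : xδ 0 ∈ Set.Icc a₁ (a₁ + r) ∧ xδ 1 = a₂ + r / 2 := by
    rw [hl₁] at hxδ; exact hxδ
  obtain ⟨hxδ'0, hxδ'1⟩ : xδ' 0 = xδ 0 ∧ xδ' 1 ∈ Set.Icc a₂ (a₂ + r) := by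
    rw [hl₂] at hxδ'; exact hxδ'
  obtain ⟨hx₀0, hx₀1⟩ := hx₀int
  obtain ⟨hx₀'0, hx₀'1⟩ := hx₀'int
  -- gradient of f at x₀ has zero first coordinate
  have hg₀0 : gradient f x₀ 0 = 0 := by
    have hε : 0 < min (x₀ 0 - a₁) (a₁ + r - x₀ 0) := by
      rw [lt_min_iff]; exact ⟨by linarith [hx₀0.1], by linarith [hx₀0.2]⟩
    have hz := sq_min_dirderiv_zero hdiff hx₀min (EuclideanSpace.single 0 1) hε ?mem
    case mem =>
      intro t ht
      rw [lt_min_iff, abs_lt, abs_lt] at ht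
      set y : EuclideanSpace ℝ (Fin 2) := x₀ + t • EuclideanSpace.single 0 1 with hy
      have h0 : y 0 = x₀ 0 + t := by rw [hy]; simp [EuclideanSpace.single_apply]
      have h1 : y 1 = x₀ 1 := by rw [hy]; simp [EuclideanSpace.single_apply]
      rw [hl₁]
      refine ⟨?_, by rw [h1]; exact hx₀1⟩
      rw [h0]
      constructor <;> [linarith [ht.1.1]; linarith [ht.2.2]]
    rw [sq_inner_two] at hz
    simpa [EuclideanSpace.single_apply] using hz
  -- gradient of f at x₀' has zero second coordinate
  have hg'1 : gradient f x₀' 1 = 0 := by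
    have hε : 0 < min (x₀' 1 - a₂) (a₂ + r - x₀' 1) := by
      rw [lt_min_iff]; exact ⟨by linarith [hx₀'1.1], by linarith [hx₀'1.2]⟩
    have hz := sq_min_dirderiv_zero hdiff hx₀'min (EuclideanSpace.single 1 1) hε ?mem
    case mem =>
      intro t ht
      rw [lt_min_iff, abs_lt, abs_lt] at ht
      set y : EuclideanSpace ℝ (Fin 2) := x₀' + t • EuclideanSpace.single 1 1 with hy
      have h0 : y 0 = x₀' 0 := by rw [hy]; simp [EuclideanSpace.single_apply]
      have h1 : y 1 = x₀' 1 + t := by rw [hy]; simp [EuclideanSpace.single_apply]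
      rw [hl₂]
      refine ⟨by rw [h0]; exact hx₀'0, ?_⟩
      rw [h1]
      constructor <;> [linarith [ht.1.1]; linarith [ht.2.2]]
    rw [sq_inner_two] at hz
    simpa [EuclideanSpace.single_apply] using hz
  -- first coordinate of gradient at xδ is small
  have hG0 : |gradient f xδ 0| ≤ L * δ := by
    have hc := sq_abs_coord_le (gradient f xδ - gradient f x₀) 0
    have hsub : (gradient f xδ - gradient f x₀) 0 = gradient f xδ 0 - gradient f x₀ 0 := by simp
    rw [hsub, hg₀0, sub_zero] at hc
    refine hc.trans ((hgrad xδ x₀).trans ?_)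
    exact mul_le_mul_of_nonneg_left hxδclose hL.le
  -- vertical closeness of xδ' and x₀'
  have hvert : |xδ' 1 - x₀' 1| ≤ δ := by
    have hc := sq_abs_coord_le (xδ' - x₀') 1
    have hsub : (xδ' - x₀') 1 = xδ' 1 - x₀' 1 := by simp
    rw [hsub] at hc
    exact hc.trans hxδ'close
  -- Lipschitz bound for the second gradient coordinate between xδ and x₀'
  have he0 : (xδ - x₀') 0 = 0 := by simp [hx₀'0]
  have hlipv : |gradient f xδ 1| ≤ L * |xδ 1 - x₀' 1| := by
    have hc := sq_abs_coord_le (gradient f xδ - gradient f x₀') 1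
    have hsub : (gradient f xδ - gradient f x₀') 1 = gradient f xδ 1 - gradient f x₀' 1 := by simp
    rw [hsub, hg'1, sub_zero] at hc
    refine hc.trans ((hgrad xδ x₀').trans ?_)
    have e1 : (xδ - x₀') 1 = xδ 1 - x₀' 1 := by simp
    have hn : ‖xδ - x₀'‖ = |xδ 1 - x₀' 1| := by rw [sq_norm_snd _ he0, e1]
    rw [hn]
  -- monotonicity of the gradient along the vertical line
  have hmono : 0 ≤ gradient f xδ 1 * (xδ 1 - x₀' 1) := by
    have hm := sq_grad_mono hconv hdiff xδ x₀'
    rw [sq_inner_two] at hm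
    have e1 : (xδ - x₀') 1 = xδ 1 - x₀' 1 := by simp
    have eg : (gradient f xδ - gradient f x₀') 1 = gradient f xδ 1 := by simp [hg'1]
    rw [he0, e1, eg, mul_zero, zero_add] at hm
    exact hm
  -- minimizer over the big square
  obtain ⟨xs, hxsK, hxsmin⟩ := (rect2_isCompact a₁ a₂ r r).exists_isMinOn
    ⟨xδ, hxδ0, by rw [hxδ1]; constructor <;> linarith⟩ hdiff.continuous.continuousOn
  have hKinf : sInf (f '' rect2 a₁ a₂ r r) = f xs := by
    apply IsLeast.csInf_eq
    refine ⟨⟨xs, hxsK, rfl⟩, ?_⟩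
    rintro y ⟨z, hz, rfl⟩
    exact isMinOn_iff.mp hxsmin z hz
  have hrhs : 0 ≤ L * δ * r * Real.sqrt 10 / 2 := by positivity
  have hsqrt : (3:ℝ) ≤ Real.sqrt 10 := by
    nlinarith [Real.sq_sqrt (show (0:ℝ) ≤ 10 by norm_num), Real.sqrt_nonneg 10]
  have hfinal : L * δ * r + L * δ * (r / 2) ≤ L * δ * r * Real.sqrt 10 / 2 := by
    have h3 : 0 ≤ L * δ * r * (Real.sqrt 10 - 3) :=
      mul_nonneg (by positivity) (by linarith)
    nlinarith
  -- bounds on the coordinates of xs - xδ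
  have hu0 : |(xs - xδ) 0| ≤ r := by
    have e : (xs - xδ) 0 = xs 0 - xδ 0 := by simp
    rw [e, abs_le]
    exact ⟨by linarith [hxsK.1.1, hxδ0.2], by linarith [hxsK.1.2, hxδ0.1]⟩
  have hb0 : -(L * δ * r) ≤ gradient f xδ 0 * (xs - xδ) 0 := by
    have h1 : -(|gradient f xδ 0| * |(xs - xδ) 0|) ≤ gradient f xδ 0 * (xs - xδ) 0 := by
      rw [← abs_mul]; exact neg_abs_le _
    have h2 : |gradient f xδ 0| * |(xs - xδ) 0| ≤ L * δ * r :=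
      mul_le_mul hG0 hu0 (abs_nonneg _) (by positivity)
    linarith
  have hfo := sq_first_order hconv hdiff xδ xs
  rw [sq_inner_two] at hfo
  have eu1 : (xs - xδ) 1 = xs 1 - xδ 1 := by simp
  rw [eu1] at hfo
  rcases hQhalf with hQ | hQ
  · -- Q is the bottom half
    subst hQ
    have hQbdd : BddBelow (f '' rect2 a₁ a₂ r (r / 2)) :=
      ((rect2_isCompact a₁ a₂ r (r / 2)).image hdiff.continuous).bddBelow
    rcases le_or_gt (xs 1) (a₂ + r / 2) with hxs1 | hxs1
    · -- the global minimizer lies in Q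
      have hontop : sInf (f '' rect2 a₁ a₂ r (r / 2)) ≤ f xs :=
        csInf_le hQbdd ⟨xs, ⟨hxsK.1, hxsK.2.1, hxs1⟩, rfl⟩
      rw [hKinf]; linarith
    · -- the global minimizer lies strictly above the midline
      have hxδ'top : xδ' 1 ≤ a₂ + r / 2 := hQmem.2.2
      -- lower bound on the second gradient coordinate at xδ
      have hG1 : -(L * δ) ≤ gradient f xδ 1 := by
        rcases le_or_gt (x₀' 1) (xδ 1) with hle | hgt
        · rcases eq_or_lt_of_le hle with heq | hlt
          · have : |xδ 1 - x₀' 1| = 0 := by rw [heq]; simp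
            rw [this, mul_zero] at hlipv
            have := abs_nonpos_iff.mp hlipv
            nlinarith [mul_nonneg hL.le hδ]
          · have hd : 0 < xδ 1 - x₀' 1 := by linarith
            have h9 : 0 ≤ gradient f xδ 1 := by
              by_contra h
              push_neg at h
              nlinarith [mul_neg_of_neg_of_pos h hd]
            nlinarith [mul_nonneg hL.le hδ]
        · have he : x₀' 1 - xδ 1 ≤ δ := by
            have := abs_le.mp hvert
            rw [hxδ1] at hgt ⊢
            linarith [this.1, hxδ'top]
          have habs : |xδ 1 - x₀' 1| = x₀' 1 - xδ 1 := by
            rw [abs_sub_comm]; exact abs_of_pos (by linarith)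
          rw [habs] at hlipv
          have := (abs_le.mp (hlipv.trans (mul_le_mul_of_nonneg_left he hL.le))).1
          linarith
      have hu1a : 0 ≤ xs 1 - xδ 1 := by rw [hxδ1]; linarith
      have hu1b : xs 1 - xδ 1 ≤ r / 2 := by rw [hxδ1]; linarith [hxsK.2.2]
      have hb1 : -(L * δ * (r / 2)) ≤ gradient f xδ 1 * (xs 1 - xδ 1) := by
        nlinarith [mul_nonneg (by linarith : (0:ℝ) ≤ gradient f xδ 1 + L * δ) hu1a,
          mul_nonneg (mul_nonneg hL.le hδ) (by linarith : (0:ℝ) ≤ r / 2 - (xs 1 - xδ 1))]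
      have hQle : sInf (f '' rect2 a₁ a₂ r (r / 2)) ≤ f xδ :=
        csInf_le hQbdd ⟨xδ, ⟨hxδ0, by rw [hxδ1]; constructor <;> linarith⟩, rfl⟩
      rw [hKinf]
      linarith
  · -- Q is the top half
    subst hQ
    have hQbdd : BddBelow (f '' rect2 a₁ (a₂ + r / 2) r (r / 2)) :=
      ((rect2_isCompact a₁ (a₂ + r / 2) r (r / 2)).image hdiff.continuous).bddBelow
    rcases le_or_gt (a₂ + r / 2) (xs 1) with hxs1 | hxs1
    · have hontop : sInf (f '' rect2 a₁ (a₂ + r / 2) r (r / 2)) ≤ f xs :=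
        csInf_le hQbdd ⟨xs, ⟨hxsK.1, hxs1, by linarith [hxsK.2.2]⟩, rfl⟩
      rw [hKinf]; linarith
    · have hxδ'bot : a₂ + r / 2 ≤ xδ' 1 := hQmem.2.1
      have hG1 : gradient f xδ 1 ≤ L * δ := by
        rcases le_or_gt (xδ 1) (x₀' 1) with hle | hgt
        · rcases eq_or_lt_of_le hle with heq | hlt
          · have : |xδ 1 - x₀' 1| = 0 := by rw [heq]; simp
            rw [this, mul_zero] at hlipv
            have := abs_nonpos_iff.mp hlipv
            nlinarith [mul_nonneg hL.le hδ]
          · have hd : xδ 1 - x₀' 1 < 0 := by linarith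
            have h9 : gradient f xδ 1 ≤ 0 := by
              by_contra h
              push_neg at h
              nlinarith [mul_neg_of_pos_of_neg h hd]
            nlinarith [mul_nonneg hL.le hδ]
        · have he : xδ 1 - x₀' 1 ≤ δ := by
            have := abs_le.mp hvert
            rw [hxδ1] at hgt ⊢
            linarith [this.2, hxδ'bot]
          have habs : |xδ 1 - x₀' 1| = xδ 1 - x₀' 1 := abs_of_pos (by linarith)
          rw [habs] at hlipv
          have := (abs_le.mp (hlipv.trans (mul_le_mul_of_nonneg_left he hL.le))).2
          linarith
      have hu1a : xs 1 - xδ 1 ≤ 0 := by rw [hxδ1]; linarith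
      have hu1b : -(r / 2) ≤ xs 1 - xδ 1 := by rw [hxδ1]; linarith [hxsK.2.1]
      have hb1 : -(L * δ * (r / 2)) ≤ gradient f xδ 1 * (xs 1 - xδ 1) := by
        nlinarith [mul_nonneg (by linarith : (0:ℝ) ≤ L * δ - gradient f xδ 1) (by linarith : (0:ℝ) ≤ -(xs 1 - xδ 1)),
          mul_nonneg (mul_nonneg hL.le hδ) (by linarith : (0:ℝ) ≤ xs 1 - xδ 1 + r / 2)]
      have hQle : sInf (f '' rect2 a₁ (a₂ + r / 2) r (r / 2)) ≤ f xδ :=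
        csInf_le hQbdd ⟨xδ, ⟨hxδ0, by rw [hxδ1]; constructor <;> linarith⟩, rfl⟩
      rw [hKinf]
      linarith
end

section
/- Let L > 0, δ ≥ 0, r > 0, and let f : ℝ² → ℝ be convex and differentiable with L-Lipschitz gradient (with respect to the Euclidean norm). Let Q = [a₁, a₁+r] × [a₂, a₂+r/2] be an axis-aligned rectangle of width r and height r/2, and let l₁ = { (a₁ + r/2, y) : y ∈ [a₂, a₂+r/2] } be its vertical midline. Let x₀ be a point of the relative interior of l₁ at which f attains its minimum over l₁, and let x_δ ∈ l₁ satisfy ‖x_δ − x₀‖ ≤ δ. Let l₂ = { (x, (x_δ)₂) : x ∈ [a₁, a₁+r] } be the horizontal segment through x_δ spanning Q, let x'₀ be a point of the relative interior of l₂ at which f attains its minimum over l₂, and let x'_δ ∈ l₂ satisfy ‖x'_δ − x'₀‖ ≤ δ. Let K' be whichever of the two closed half-squares [a₁, a₁+r/2] × [a₂, a₂+r/2] and [a₁+r/2, a₁+r] × [a₂, a₂+r/2] contains x'_δ. Then min_{x∈K'} f(x) − min_{x∈Q} f(x) ≤ L·δ·r. -/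
open InnerProductSpace

local notation "E2" => EuclideanSpace ℝ (Fin 2)

lemma grad_inner_eq (f : E2 → ℝ) (x v : E2) :
    (inner ℝ (gradient f x) v : ℝ) = fderiv ℝ f x v := by
  rw [gradient]; exact toDual_symm_apply

lemma line_hasDerivAt (f : E2 → ℝ) (hdiff : Differentiable ℝ f) (x v : E2) :
    HasDerivAt (fun t : ℝ => f (x + t • v)) (fderiv ℝ f x v) 0 := by
  have h2 : HasDerivAt (fun t : ℝ => x + t • v) v 0 := by
    simpa using ((hasDerivAt_id (0 : ℝ)).smul_const v).const_add x
  have key := ((hdiff (x + (0 : ℝ) • v)).hasFDerivAt).comp_hasDerivAt 0 h2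
  rw [zero_smul, add_zero] at key; exact key

lemma subgrad (f : E2 → ℝ) (hconv : ConvexOn ℝ Set.univ f) (hdiff : Differentiable ℝ f)
    (x y : E2) : f x + (inner ℝ (gradient f x) (y - x) : ℝ) ≤ f y := by
  set φ : ℝ → ℝ := fun t => f (x + t • (y - x)) with hφ
  have hφconv : ConvexOn ℝ Set.univ φ := by
    have := hconv.comp_affineMap (AffineMap.lineMap x y : ℝ →ᵃ[ℝ] E2)
    simp only [Set.preimage_univ] at this
    suffices hfun : φ = f ∘ (AffineMap.lineMap x y : ℝ →ᵃ[ℝ] E2) by rw [hfun]; exact this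
    funext t
    simp [hφ, AffineMap.lineMap_apply, Function.comp, add_comm]
  have hd : HasDerivAt φ (fderiv ℝ f x (y - x)) 0 := line_hasDerivAt f hdiff x (y - x)
  have := hφconv.le_slope_of_hasDerivAt (Set.mem_univ 0) (Set.mem_univ 1) zero_lt_one hd
  rw [grad_inner_eq, map_sub]
  have hφ0 : φ 0 = f x := by simp [hφ]
  have hφ1 : φ 1 = f y := by simp [hφ]
  rw [slope_def_field] at this
  rw [hφ0, hφ1] at this
  simp at this
  linarith

lemma crit (f : E2 → ℝ) (hdiff : Differentiable ℝ f) (s : Set E2) (x v : E2)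
    (hmin : IsMinOn f s x) (h : ∀ᶠ t in nhds (0 : ℝ), x + t • v ∈ s) :
    fderiv ℝ f x v = 0 := by
  have hloc : IsLocalMin (fun t : ℝ => f (x + t • v)) 0 := by
    filter_upwards [h] with t ht
    simpa using hmin ht
  exact hloc.hasDerivAt_eq_zero (line_hasDerivAt f hdiff x v)

lemma coord_abs_le_norm (v : E2) (i : Fin 2) : |v i| ≤ ‖v‖ := by
  have := abs_real_inner_le_norm v (EuclideanSpace.single i (1 : ℝ))
  simpa [EuclideanSpace.inner_single_right, EuclideanSpace.norm_single] using this

lemma inner_expand (u w : E2) : (inner ℝ u w : ℝ) = u 0 * w 0 + u 1 * w 1 := by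
  simp [PiLp.inner_apply, RCLike.inner_apply, Fin.sum_univ_two, mul_comm]

lemma norm_eq_abs0 (v : E2) (h : v 1 = 0) : ‖v‖ = |v 0| := by
  rw [EuclideanSpace.norm_eq]
  simp [Fin.sum_univ_two, h, Real.sqrt_sq_eq_abs]

lemma norm_le_abs_add (v : E2) : ‖v‖ ≤ |v 0| + |v 1| := by
  rw [EuclideanSpace.norm_eq]
  simp only [Fin.sum_univ_two, Real.norm_eq_abs]
  rw [show |v 0| + |v 1| = Real.sqrt ((|v 0| + |v 1|) ^ 2) by
    rw [Real.sqrt_sq (by positivity)]]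
  apply Real.sqrt_le_sqrt
  nlinarith [abs_nonneg (v 0), abs_nonneg (v 1)]


set_option maxHeartbeats 1000000 in
/-- Rectangle-to-square step: `x₀` is an (interior) minimizer of `f` on the vertical
midline `l₁` of the rectangle `Q = [a₁,a₁+r] × [a₂,a₂+r/2]`, `x_δ ∈ l₁` is `δ`-close to
it, `x'₀` is an (interior) minimizer of `f` on the horizontal segment `l₂` through `x_δ`
spanning `Q`, and `x'_δ ∈ l₂` is `δ`-close to it. If `K'` is the closed half-square of `Q`
containing `x'_δ`, then `min_{K'} f − min_Q f ≤ L·δ·r`. -/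
theorem rectangle_to_square_min_increase (L δ r : ℝ) (hL : 0 < L) (hδ : 0 ≤ δ)
    (hr : 0 < r) (a₁ a₂ : ℝ) (f : EuclideanSpace ℝ (Fin 2) → ℝ)
    (hconv : ConvexOn ℝ Set.univ f) (hdiff : Differentiable ℝ f)
    (hgrad : ∀ x y, ‖gradient f x - gradient f y‖ ≤ L * ‖x - y‖)
    (l₁ : Set (EuclideanSpace ℝ (Fin 2)))
    (hl₁ : l₁ = {x | x 0 = a₁ + r / 2 ∧ x 1 ∈ Set.Icc a₂ (a₂ + r / 2)})
    (x₀ : EuclideanSpace ℝ (Fin 2))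
    (hx₀int : x₀ 0 = a₁ + r / 2 ∧ x₀ 1 ∈ Set.Ioo a₂ (a₂ + r / 2))
    (hx₀min : IsMinOn f l₁ x₀)
    (xδ : EuclideanSpace ℝ (Fin 2)) (hxδ : xδ ∈ l₁) (hxδclose : ‖xδ - x₀‖ ≤ δ)
    (l₂ : Set (EuclideanSpace ℝ (Fin 2)))
    (hl₂ : l₂ = {x | x 0 ∈ Set.Icc a₁ (a₁ + r) ∧ x 1 = xδ 1})
    (x₀' : EuclideanSpace ℝ (Fin 2))
    (hx₀'int : x₀' 0 ∈ Set.Ioo a₁ (a₁ + r) ∧ x₀' 1 = xδ 1)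
    (hx₀'min : IsMinOn f l₂ x₀')
    (xδ' : EuclideanSpace ℝ (Fin 2)) (hxδ' : xδ' ∈ l₂) (hxδ'close : ‖xδ' - x₀'‖ ≤ δ)
    (K' : Set (EuclideanSpace ℝ (Fin 2)))
    (hK'half : K' = rect2 a₁ a₂ (r / 2) (r / 2) ∨ K' = rect2 (a₁ + r / 2) a₂ (r / 2) (r / 2))
    (hK'mem : xδ' ∈ K') :
    sInf (f '' K') - sInf (f '' rect2 a₁ a₂ r (r / 2)) ≤ L * δ * r := by
  obtain ⟨hx₀0, hx₀1⟩ := hx₀int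
  obtain ⟨hx₀'0, hx₀'1⟩ := hx₀'int
  rw [hl₁] at hxδ
  obtain ⟨hxδ0, hxδ1⟩ := hxδ
  rw [hl₂] at hxδ'
  obtain ⟨hxδ'0, hxδ'1⟩ := hxδ'
  have hcomp : ∀ (x : EuclideanSpace ℝ (Fin 2)) (i : Fin 2),
      gradient f x i = fderiv ℝ f x (EuclideanSpace.single i 1) := by
    intro x i
    rw [← grad_inner_eq, EuclideanSpace.inner_single_right]
    simp
  -- the vertical partial derivative vanishes at x₀
  have h1zero : gradient f x₀ 1 = 0 := by
    rw [hcomp]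
    apply crit f hdiff l₁ x₀ _ hx₀min
    have hmem : Set.Ioo (a₂ - x₀ 1) (a₂ + r / 2 - x₀ 1) ∈ nhds (0 : ℝ) :=
      Ioo_mem_nhds (by linarith [hx₀1.1]) (by linarith [hx₀1.2])
    filter_upwards [hmem] with t ht
    rw [hl₁]
    constructor
    · simp [EuclideanSpace.single_apply, hx₀0]
    · simp only [PiLp.add_apply, PiLp.smul_apply, EuclideanSpace.single_apply]
      norm_num
      constructor <;> linarith [ht.1, ht.2]
  -- the horizontal partial derivative vanishes at x₀'
  have h0zero : gradient f x₀' 0 = 0 := by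
    rw [hcomp]
    apply crit f hdiff l₂ x₀' _ hx₀'min
    have hmem : Set.Ioo (a₁ - x₀' 0) (a₁ + r - x₀' 0) ∈ nhds (0 : ℝ) :=
      Ioo_mem_nhds (by linarith [hx₀'0.1]) (by linarith [hx₀'0.2])
    filter_upwards [hmem] with t ht
    rw [hl₂]
    constructor
    · simp only [PiLp.add_apply, PiLp.smul_apply, EuclideanSpace.single_apply]
      norm_num
      constructor <;> linarith [ht.1, ht.2]
    · simp [EuclideanSpace.single_apply, hx₀'1]
  have hb1 : |gradient f xδ 1| ≤ L * δ := by
    have h := hgrad xδ x₀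
    have h2 := coord_abs_le_norm (gradient f xδ - gradient f x₀) 1
    have h3 : (gradient f xδ - gradient f x₀) 1 = gradient f xδ 1 - gradient f x₀ 1 := PiLp.sub_apply _ _ _ _
    rw [h3, h1zero, sub_zero] at h2
    have h4 : L * ‖xδ - x₀‖ ≤ L * δ := mul_le_mul_of_nonneg_left hxδclose hL.le
    linarith
  have hxδl₂ : xδ ∈ l₂ := by
    rw [hl₂]
    refine ⟨?_, rfl⟩
    rw [hxδ0]
    constructor <;> [linarith; linarith]
  have hF4 : gradient f xδ 0 * (x₀' 0 - (a₁ + r / 2)) ≤ 0 := by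
    have hsub := subgrad f hconv hdiff xδ x₀'
    rw [inner_expand] at hsub
    have hc0 : (x₀' - xδ) 0 = x₀' 0 - (a₁ + r / 2) := by
      have : (x₀' - xδ) 0 = x₀' 0 - xδ 0 := PiLp.sub_apply _ _ _ _
      rw [this, hxδ0]
    have hc1 : (x₀' - xδ) 1 = 0 := by
      have : (x₀' - xδ) 1 = x₀' 1 - xδ 1 := PiLp.sub_apply _ _ _ _
      rw [this, hx₀'1, sub_self]
    rw [hc0, hc1] at hsub
    have hmin := isMinOn_iff.mp hx₀'min xδ hxδl₂
    nlinarith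
  have hd0 : |xδ' 0 - x₀' 0| ≤ δ := by
    have h1 := coord_abs_le_norm (xδ' - x₀') 0
    have h2 : (xδ' - x₀') 0 = xδ' 0 - x₀' 0 := PiLp.sub_apply _ _ _ _
    rw [h2] at h1
    linarith
  have hb0' : |x₀' 0 - (a₁ + r / 2)| ≤ δ → |gradient f xδ 0| ≤ L * δ := by
    intro h
    have hn : ‖xδ - x₀'‖ = |x₀' 0 - (a₁ + r / 2)| := by
      rw [norm_eq_abs0 (xδ - x₀') (by
        have : (xδ - x₀') 1 = xδ 1 - x₀' 1 := PiLp.sub_apply _ _ _ _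
        rw [this, hx₀'1, sub_self])]
      have : (xδ - x₀') 0 = xδ 0 - x₀' 0 := PiLp.sub_apply _ _ _ _
      rw [this, hxδ0, abs_sub_comm]
    have h1 := coord_abs_le_norm (gradient f xδ - gradient f x₀') 0
    have h2 : (gradient f xδ - gradient f x₀') 0 = gradient f xδ 0 - gradient f x₀' 0 := PiLp.sub_apply _ _ _ _
    rw [h2, h0zero, sub_zero] at h1
    have h3 := hgrad xδ x₀'
    rw [hn] at h3
    nlinarith
  -- the pointwise key estimate
  have key : ∀ z ∈ rect2 a₁ a₂ r (r / 2), ∃ w ∈ K', f w ≤ f z + L * δ * r := by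
    intro z hz
    obtain ⟨hz0, hz1⟩ := hz
    by_cases hzK : z ∈ K'
    · refine ⟨z, hzK, ?_⟩
      have hpos : 0 ≤ L * δ * r := by positivity
      linarith
    · have hxδK : xδ ∈ K' := by
        rcases hK'half with h | h <;> rw [h] <;>
          exact ⟨by rw [hxδ0]; constructor <;> linarith, hxδ1⟩
      refine ⟨xδ, hxδK, ?_⟩
      have hsub := subgrad f hconv hdiff xδ z
      rw [inner_expand] at hsub
      have hc0 : (z - xδ) 0 = z 0 - (a₁ + r / 2) := by
        have : (z - xδ) 0 = z 0 - xδ 0 := PiLp.sub_apply _ _ _ _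
        rw [this, hxδ0]
      have hc1 : (z - xδ) 1 = z 1 - xδ 1 := PiLp.sub_apply _ _ _ _
      rw [hc0, hc1] at hsub
      have ht1 : -(L * δ * r / 2) ≤ gradient f xδ 1 * (z 1 - xδ 1) := by
        have h1 : |z 1 - xδ 1| ≤ r / 2 :=
          abs_le.mpr ⟨by linarith [hz1.1, hz1.2, hxδ1.1, hxδ1.2],
            by linarith [hz1.1, hz1.2, hxδ1.1, hxδ1.2]⟩
        nlinarith [neg_abs_le (gradient f xδ 1 * (z 1 - xδ 1)),
          abs_mul (gradient f xδ 1) (z 1 - xδ 1),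
          mul_le_mul hb1 h1 (abs_nonneg _) (by positivity)]
      have ht0 : -(L * δ * r / 2) ≤ gradient f xδ 0 * (z 0 - (a₁ + r / 2)) := by
        have habs_bound : |x₀' 0 - (a₁ + r / 2)| ≤ δ →
            -(L * δ * r / 2) ≤ gradient f xδ 0 * (z 0 - (a₁ + r / 2)) := by
          intro habs
          have hb0 := hb0' habs
          have h0 : |z 0 - (a₁ + r / 2)| ≤ r / 2 :=
            abs_le.mpr ⟨by linarith [hz0.1], by linarith [hz0.2]⟩
          nlinarith [neg_abs_le (gradient f xδ 0 * (z 0 - (a₁ + r / 2))),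
            abs_mul (gradient f xδ 0) (z 0 - (a₁ + r / 2)),
            mul_le_mul hb0 h0 (abs_nonneg _) (by positivity)]
        rcases hK'half with hK | hK
        · -- K' is the left half, so z must be in the right half
          have hz0' : a₁ + r / 2 < z 0 := by
            by_contra hcon
            push_neg at hcon
            exact hzK (by rw [hK]; exact ⟨⟨hz0.1, hcon⟩, hz1⟩)
          rcases le_or_gt 0 (gradient f xδ 0) with hc | hc
          · have h1 : 0 ≤ gradient f xδ 0 * (z 0 - (a₁ + r / 2)) :=
              mul_nonneg hc (by linarith)
            have h2 : 0 ≤ L * δ * r / 2 := by positivity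
            linarith
          · have hxc : a₁ + r / 2 ≤ x₀' 0 := by nlinarith
            have hxδ'0le : xδ' 0 ≤ a₁ + r / 2 := by
              rw [hK] at hK'mem
              exact hK'mem.1.2
            have h5 := abs_le.mp hd0
            exact habs_bound (abs_le.mpr ⟨by linarith, by linarith [h5.1]⟩)
        · -- K' is the right half, so z must be in the left half
          have hz0' : z 0 < a₁ + r / 2 := by
            by_contra hcon
            push_neg at hcon
            exact hzK (by rw [hK]; exact ⟨⟨hcon, by linarith [hz0.2]⟩, hz1⟩)
          rcases le_or_gt (gradient f xδ 0) 0 with hc | hc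
          · have h1 : 0 ≤ (-(gradient f xδ 0)) * ((a₁ + r / 2) - z 0) :=
              mul_nonneg (by linarith) (by linarith)
            have h2 : 0 ≤ L * δ * r / 2 := by positivity
            nlinarith [h1, h2]
          · have hxc : x₀' 0 ≤ a₁ + r / 2 := by nlinarith
            have hxδ'0ge : a₁ + r / 2 ≤ xδ' 0 := by
              rw [hK] at hK'mem
              exact hK'mem.1.1
            have h5 := abs_le.mp hd0
            exact habs_bound (abs_le.mpr ⟨by linarith [h5.2], by linarith⟩)
      linarith
  -- lower bound on f over Q
  have hlow : ∀ y ∈ rect2 a₁ a₂ r (r / 2), f x₀ - ‖gradient f x₀‖ * (2 * r) ≤ f y := by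
    intro y hy
    have hsub := subgrad f hconv hdiff x₀ y
    have hinner : -(‖gradient f x₀‖ * ‖y - x₀‖) ≤ (inner ℝ (gradient f x₀) (y - x₀) : ℝ) := by
      have := abs_real_inner_le_norm (gradient f x₀) (y - x₀)
      have := neg_abs_le (inner ℝ (gradient f x₀) (y - x₀) : ℝ)
      linarith
    have hnorm : ‖y - x₀‖ ≤ 2 * r := by
      have h := norm_le_abs_add (y - x₀)
      have h0 : (y - x₀) 0 = y 0 - x₀ 0 := PiLp.sub_apply _ _ _ _
      have h1 : (y - x₀) 1 = y 1 - x₀ 1 := PiLp.sub_apply _ _ _ _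
      have ha : |y 0 - x₀ 0| ≤ r :=
        abs_le.mpr ⟨by linarith [hy.1.1, hx₀0], by linarith [hy.1.2, hx₀0]⟩
      have hb : |y 1 - x₀ 1| ≤ r / 2 :=
        abs_le.mpr ⟨by linarith [hy.2.1, hx₀1.1, hx₀1.2], by linarith [hy.2.2, hx₀1.1, hx₀1.2]⟩
      rw [h0, h1] at h
      linarith
    nlinarith [norm_nonneg (gradient f x₀), norm_nonneg (y - x₀)]
  have hxδQ : xδ ∈ rect2 a₁ a₂ r (r / 2) := by
    refine ⟨?_, hxδ1⟩
    rw [hxδ0]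
    constructor <;> linarith
  have hBQ : BddBelow (f '' rect2 a₁ a₂ r (r / 2)) := by
    refine ⟨f x₀ - ‖gradient f x₀‖ * (2 * r), ?_⟩
    rintro b ⟨y, hy, rfl⟩
    exact hlow y hy
  have hK'subQ : K' ⊆ rect2 a₁ a₂ r (r / 2) := by
    rcases hK'half with h | h <;> rw [h] <;> intro w hw <;>
      exact ⟨⟨by linarith [hw.1.1, hw.1.2], by linarith [hw.1.1, hw.1.2]⟩, hw.2⟩
  have hBK : BddBelow (f '' K') := BddBelow.mono (Set.image_mono hK'subQ) hBQ
  have main : sInf (f '' K') - L * δ * r ≤ sInf (f '' rect2 a₁ a₂ r (r / 2)) := by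
    refine le_csInf ⟨f xδ, Set.mem_image_of_mem f hxδQ⟩ ?_
    rintro b ⟨z, hz, rfl⟩
    obtain ⟨w, hw, hfw⟩ := key z hz
    have := csInf_le hBK (Set.mem_image_of_mem f hw)
    linarith
  linarith
end

section
/- Let f : ℝ² → ℝ be convex, let K = [a₁, a₁+r] × [a₂, a₂+r] be an axis-aligned square (r > 0), let l₁ = { (x, a₂ + r/2) : x ∈ [a₁, a₁+r] } be its horizontal midline, and let Q = [a₁, a₁+r] × [a₂+r/2, a₂+r] and Z = [a₁, a₁+r] × [a₂, a₂+r/2] be the two closed halves of K determined by l₁. Suppose x₀ ∈ l₁ is a point where f attains its minimum over l₁, and suppose f attains its minimum over K at some point x* ∈ Z. Then f(x₀) = min_{x∈Q} f(x); that is, the minimizer of f on the midline also minimizes f over the half Q not containing x*. -/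
open Set

section Segment

variable {𝕜 E : Type*} [Field 𝕜] [LinearOrder 𝕜] [IsStrictOrderedRing 𝕜] [AddCommGroup E]
  [Module 𝕜 E]

theorem exists_mem_segment_apply_eq (ℓ : E →ₗ[𝕜] 𝕜) {x y : E} {c : 𝕜} (hx : ℓ x ≤ c)
    (hy : c ≤ ℓ y) : ∃ p ∈ segment 𝕜 x y, ℓ p = c := by
  have hc : c ∈ ℓ.toAffineMap '' segment 𝕜 x y := by
    rw [image_segment]
    change c ∈ segment 𝕜 (ℓ x) (ℓ y)
    rw [segment_eq_Icc (hx.trans hy)]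
    exact ⟨hx, hy⟩
  simpa using hc

theorem ConvexOn.le_right_of_mem_segment_of_le {β : Type*} [AddCommGroup β] [LinearOrder β]
    [IsOrderedAddMonoid β] [Module 𝕜 β] [IsStrictOrderedModule 𝕜 β] {s : Set E} {f : E → β}
    {x y z : E} (hf : ConvexOn 𝕜 s f) (hx : x ∈ s) (hy : y ∈ s) (hxy : f x ≤ f y)
    (hz : z ∈ segment 𝕜 x y) : f z ≤ f y :=
  (hf.le_max_of_mem_segment hx hy hz).trans_eq (max_eq_right hxy)

end Segment

theorem convex_rect2 (a₁ a₂ w h : ℝ) : Convex ℝ (rect2 a₁ a₂ w h) :=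
  ((convex_Icc _ _).linear_preimage (EuclideanSpace.proj (𝕜 := ℝ) (0 : Fin 2)).toLinearMap).inter
    ((convex_Icc _ _).linear_preimage (EuclideanSpace.proj (𝕜 := ℝ) (1 : Fin 2)).toLinearMap)

theorem rect2_subset_rect2 {a₁ a₂ b₂ w h k : ℝ} (hab : a₂ ≤ b₂) (hk : b₂ + k ≤ a₂ + h) :
    rect2 a₁ b₂ w k ⊆ rect2 a₁ a₂ w h :=
  fun _ ⟨hx₀, hx₁⟩ ↦ ⟨hx₀, by constructor <;> linarith [hx₁.1, hx₁.2]⟩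

theorem midline_minimizer_minimizes_half_general (r : ℝ) (a₁ a₂ : ℝ)
    (f : EuclideanSpace ℝ (Fin 2) → ℝ) (hconv : ConvexOn ℝ Set.univ f)
    (l₁ : Set (EuclideanSpace ℝ (Fin 2)))
    (hl₁ : l₁ = {x | x 0 ∈ Set.Icc a₁ (a₁ + r) ∧ x 1 = a₂ + r / 2})
    (Q Z : Set (EuclideanSpace ℝ (Fin 2)))
    (hQ : Q = rect2 a₁ (a₂ + r / 2) r (r / 2)) (hZ : Z = rect2 a₁ a₂ r (r / 2))
    (x₀ : EuclideanSpace ℝ (Fin 2)) (hx₀l : x₀ ∈ l₁) (hx₀min : IsMinOn f l₁ x₀)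
    (xs : EuclideanSpace ℝ (Fin 2)) (hxsZ : xs ∈ Z)
    (hxsmin : IsMinOn f (rect2 a₁ a₂ r r) xs) :
    f x₀ = sInf (f '' Q) := by
  subst hl₁ hQ hZ
  obtain ⟨hx₀₀, hx₀₁⟩ := hx₀l
  have hr : 0 ≤ r := by linarith [hx₀₀.1, hx₀₀.2]
  have hQK : rect2 a₁ (a₂ + r / 2) r (r / 2) ⊆ rect2 a₁ a₂ r r :=
    rect2_subset_rect2 (by linarith) (by linarith)
  have hxsK : xs ∈ rect2 a₁ a₂ r r := rect2_subset_rect2 le_rfl (by linarith) hxsZ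
  have hx₀Q : x₀ ∈ rect2 a₁ (a₂ + r / 2) r (r / 2) :=
    ⟨hx₀₀, by rw [hx₀₁]; constructor <;> linarith⟩
  refine (IsLeast.csInf_eq ⟨mem_image_of_mem f hx₀Q, ?_⟩).symm
  rintro _ ⟨y, hyQ, rfl⟩
  obtain ⟨p, hp, hp₁⟩ := exists_mem_segment_apply_eq
    (EuclideanSpace.proj (𝕜 := ℝ) (1 : Fin 2)).toLinearMap hxsZ.2.2 hyQ.2.1
  have hpK : p ∈ rect2 a₁ a₂ r r := (convex_rect2 a₁ a₂ r r).segment_subset hxsK (hQK hyQ) hp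
  calc f x₀ ≤ f p := hx₀min ⟨hpK.1, hp₁⟩
    _ ≤ f y := hconv.le_right_of_mem_segment_of_le (mem_univ _) (mem_univ _)
        (hxsmin (hQK hyQ)) hp

/-- Let `f` be convex on `ℝ²`, `K` the square `[a₁,a₁+r] × [a₂,a₂+r]` with horizontal
midline `l₁`, upper half `Q` and lower half `Z`. If `x₀` minimizes `f` over `l₁` and the
minimum of `f` over `K` is attained at some `x* ∈ Z`, then `f(x₀)` equals the minimum of
`f` over `Q`. -/
theorem midline_minimizer_minimizes_half (r : ℝ) (hr : 0 < r) (a₁ a₂ : ℝ)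
    (f : EuclideanSpace ℝ (Fin 2) → ℝ) (hconv : ConvexOn ℝ Set.univ f)
    (l₁ : Set (EuclideanSpace ℝ (Fin 2)))
    (hl₁ : l₁ = {x | x 0 ∈ Set.Icc a₁ (a₁ + r) ∧ x 1 = a₂ + r / 2})
    (Q Z : Set (EuclideanSpace ℝ (Fin 2)))
    (hQ : Q = rect2 a₁ (a₂ + r / 2) r (r / 2)) (hZ : Z = rect2 a₁ a₂ r (r / 2))
    (x₀ : EuclideanSpace ℝ (Fin 2)) (hx₀l : x₀ ∈ l₁) (hx₀min : IsMinOn f l₁ x₀)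
    (xs : EuclideanSpace ℝ (Fin 2)) (hxsZ : xs ∈ Z)
    (hxsmin : IsMinOn f (rect2 a₁ a₂ r r) xs) :
    f x₀ = sInf (f '' Q) :=
  midline_minimizer_minimizes_half_general r a₁ a₂ f hconv l₁ hl₁ Q Z hQ hZ x₀ hx₀l hx₀min xs hxsZ
    hxsmin
end

section
/- Let R > 0, M > 0, μ > 0, Δ > 0, let φ = (1+√5)/2 be the golden ratio, and let f : [0,R] → ℝ be convex, differentiable, M-Lipschitz, and μ-strongly convex. Set C = e·R·M·ln(φ)/(2φ), and suppose n₀ := log_φ(C/(e·Δ)) is a nonnegative integer. Let (a_k)_{k=0}^{n₀}, (b_k)_{k=0}^{n₀} be a noisy golden-ratio-method run of length n₀ for f with noise level Δ on [0,R], let x₀ = (a_{n₀} + b_{n₀})/2, and let x* ∈ [0,R] be the point where f attains its minimum over [0,R]. Then |x₀ − x*| ≤ √(2·φ·Δ·log_φ(C/Δ)/μ). -/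
open Real

private lemma gold_gt_32 : (3:ℝ)/2 < goldenRatio := by
  nlinarith [goldenRatio_sq, goldenRatio_pos, one_lt_goldenRatio]

private lemma gold_inv_eq : 1 / goldenRatio = goldenRatio - 1 := by
  rw [eq_comm, eq_div_iff goldenRatio_ne_zero]
  nlinarith [goldenRatio_sq]

set_option maxHeartbeats 1000000 in
private lemma gr_invariant_s12 (f : ℝ → ℝ) (R Δ : ℝ) (hR : 0 < R) (hΔ : 0 < Δ)
    (hconv : ConvexOn ℝ (Set.Icc 0 R) f)
    (n : ℕ) (a b : ℕ → ℝ) (hrun : GoldenRatioRun f R Δ n a b)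
    (xs : ℝ) (hxs : xs ∈ Set.Icc (0 : ℝ) R) :
    ∀ k, k ≤ n → 0 ≤ a k ∧ b k ≤ R ∧ b k - a k = R / goldenRatio ^ k ∧
      ∃ y, a k ≤ y ∧ y ≤ b k ∧ f y ≤ f xs + k * (goldenRatio * Δ) := by
  obtain ⟨ha0, hb0, hstep⟩ := hrun
  have hφ1 : (1:ℝ) < goldenRatio := one_lt_goldenRatio
  have hφ0 : (0:ℝ) < goldenRatio := goldenRatio_pos
  have hφ2 : goldenRatio < 2 := goldenRatio_lt_two
  have hφ32 : (3:ℝ)/2 < goldenRatio := gold_gt_32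
  have hinv : (1:ℝ) / goldenRatio = goldenRatio - 1 := gold_inv_eq
  intro k
  induction k with
  | zero =>
    intro _
    refine ⟨by simp [ha0], by simp [hb0], by simp [ha0, hb0], xs, ?_, ?_, by simp⟩
    · simpa [ha0] using hxs.1
    · simpa [hb0] using hxs.2
  | succ k ih =>
    intro hk
    obtain ⟨hA0, hBR, hlen, y, hay, hyb, hfy⟩ := ih (by omega)
    set A := a k with hA
    set B := b k with hB
    have hd : 0 < B - A := by
      rw [hlen]; positivity
    have hdiv : (B - A) / goldenRatio = (B - A) * (goldenRatio - 1) := by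
      rw [div_eq_mul_one_div, hinv]
    set s := B - (B - A) / goldenRatio with hs
    set t := A + (B - A) / goldenRatio with ht
    have hsA : s - A = (B - A) * (2 - goldenRatio) := by rw [hs, hdiv]; ring
    have hBt : B - t = (B - A) * (2 - goldenRatio) := by rw [ht, hdiv]; ring
    have hts : t - s = (B - A) * (2 * goldenRatio - 3) := by rw [hs, ht, hdiv]; ring
    have hts0 : 0 < t - s := by rw [hts]; exact mul_pos hd (by linarith)
    have hsA0 : 0 < s - A := by rw [hsA]; exact mul_pos hd (by linarith)
    have hBt0 : 0 < B - t := by rw [hBt]; exact mul_pos hd (by linarith)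
    have hratio : (B - A) * (2 - goldenRatio) = goldenRatio * (t - s) := by
      rw [hts]; linear_combination (-2*(B - A)) * goldenRatio_sq
    have hnewlen : (B - A) / goldenRatio = R / goldenRatio ^ (k + 1) := by
      rw [hlen, pow_succ, div_div]
    have hy0R : y ∈ Set.Icc (0:ℝ) R := ⟨by linarith, by linarith⟩
    have ht0R : t ∈ Set.Icc (0:ℝ) R := ⟨by linarith, by linarith⟩
    have hs0R : s ∈ Set.Icc (0:ℝ) R := ⟨by linarith, by linarith⟩
    clear_value A B s t
    rcases hstep k (by omega) with ⟨hak, hbk, hcmp⟩ | ⟨hak, hbk, hcmp⟩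
    · -- keep right interval [s, B]
      simp only [← hA, ← hB] at hak hbk hcmp
      simp only [← hs, ← ht] at hak hbk hcmp
      refine ⟨by rw [hak]; linarith, by rw [hbk]; exact hBR, ?_, ?_⟩
      · rw [hak, hbk, ← hnewlen, hs]; ring
      · rcases le_or_gt s y with hys | hys
        · exact ⟨y, by rw [hak]; exact hys, by rw [hbk]; exact hyb,
            by push_cast; nlinarith [mul_pos hφ0 hΔ]⟩
        · have htty : 0 < t - y := by linarith
          have hcvx := hconv.2 hy0R ht0R
            (le_of_lt (div_pos hts0 htty))
            (le_of_lt (div_pos (show (0:ℝ) < s - y by linarith) htty))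
            (show (t - s) / (t - y) + (s - y) / (t - y) = 1 by
              rw [← add_div, div_eq_one_iff_eq (ne_of_gt htty)]; ring)
          have hpt : ((t - s) / (t - y)) • y + ((s - y) / (t - y)) • t = s := by
            simp only [smul_eq_mul]
            field_simp
            ring
          rw [hpt] at hcvx
          simp only [smul_eq_mul] at hcvx
          have hclear : f s * (t - y) ≤ (t - s) * f y + (s - y) * f t := by
            rw [div_mul_eq_mul_div, div_mul_eq_mul_div, ← add_div,
              le_div_iff₀ htty] at hcvx
            linarith [hcvx]
          have hsy : s - y ≤ goldenRatio * (t - s) := by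
            rw [← hratio, ← hsA]; linarith
          refine ⟨s, by rw [hak], by rw [hbk]; linarith, ?_⟩
          push_cast
          nlinarith [mul_nonneg (le_of_lt (by linarith : (0:ℝ) < s - y))
            (by linarith [hcmp] : (0:ℝ) ≤ f s + Δ - f t),
            mul_nonneg hΔ.le (by linarith : (0:ℝ) ≤ goldenRatio * (t - s) - (s - y))]
    · -- keep left interval [A, t]
      simp only [← hA, ← hB] at hak hbk hcmp
      simp only [← hs, ← ht] at hak hbk hcmp
      refine ⟨by rw [hak]; exact hA0, by rw [hbk]; linarith, ?_, ?_⟩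
      · rw [hak, hbk, ← hnewlen, ht]; ring
      · rcases le_or_gt y t with hyt | hyt
        · exact ⟨y, by rw [hak]; exact hay, by rw [hbk]; exact hyt,
            by push_cast; nlinarith [mul_pos hφ0 hΔ]⟩
        · have hyys : 0 < y - s := by linarith
          have hcvx := hconv.2 hs0R hy0R
            (le_of_lt (div_pos (show (0:ℝ) < y - t by linarith) hyys))
            (le_of_lt (div_pos hts0 hyys))
            (show (y - t) / (y - s) + (t - s) / (y - s) = 1 by
              rw [← add_div, div_eq_one_iff_eq (ne_of_gt hyys)]; ring)
          have hpt : ((y - t) / (y - s)) • s + ((t - s) / (y - s)) • y = t := by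
            simp only [smul_eq_mul]
            field_simp
            ring
          rw [hpt] at hcvx
          simp only [smul_eq_mul] at hcvx
          have hclear : f t * (y - s) ≤ (y - t) * f s + (t - s) * f y := by
            rw [div_mul_eq_mul_div, div_mul_eq_mul_div, ← add_div,
              le_div_iff₀ hyys] at hcvx
            linarith [hcvx]
          have hty : y - t ≤ goldenRatio * (t - s) := by
            rw [← hratio, ← hBt]; linarith
          refine ⟨t, by rw [hak]; linarith, by rw [hbk], ?_⟩
          push_cast
          nlinarith [mul_nonneg (le_of_lt (by linarith : (0:ℝ) < y - t))
            (by linarith [hcmp] : (0:ℝ) ≤ f t + Δ - f s),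
            mul_nonneg hΔ.le (by linarith : (0:ℝ) ≤ goldenRatio * (t - s) - (y - t))]

/-- Combining Theorem 1 and Lemma 1: for a convex, differentiable, `M`-Lipschitz and
`μ`-strongly convex `f` on `[0, R]`, after `n₀ = log_φ(C/(e·Δ))` noisy golden-ratio
iterations the midpoint of the remaining interval is within `√(2·φ·Δ·log_φ(C/Δ)/μ)`
of the minimizer, where `C = e·R·M·ln φ/(2φ)`. -/
theorem golden_ratio_method_argument_accuracy (R M μ Δ : ℝ) (hR : 0 < R) (hM : 0 < M)
    (hμ : 0 < μ) (hΔ : 0 < Δ) (f f' : ℝ → ℝ)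
    (hconv : ConvexOn ℝ (Set.Icc 0 R) f)
    (hdiff : ∀ x ∈ Set.Icc (0 : ℝ) R, HasDerivWithinAt f (f' x) (Set.Icc 0 R) x)
    (hlip : ∀ x ∈ Set.Icc (0 : ℝ) R, ∀ y ∈ Set.Icc (0 : ℝ) R, |f x - f y| ≤ M * |x - y|)
    (hsc : ∀ x ∈ Set.Icc (0 : ℝ) R, ∀ y ∈ Set.Icc (0 : ℝ) R,
      f y ≥ f x + f' x * (y - x) + μ / 2 * |y - x| ^ 2)
    (C : ℝ) (hC : C = Real.exp 1 * R * M * Real.log Real.goldenRatio / (2 * Real.goldenRatio))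
    (n₀ : ℕ) (hn₀ : (n₀ : ℝ) = Real.logb Real.goldenRatio (C / (Real.exp 1 * Δ)))
    (a b : ℕ → ℝ) (hrun : GoldenRatioRun f R Δ n₀ a b)
    (xs : ℝ) (hxs : xs ∈ Set.Icc (0 : ℝ) R) (hxsmin : IsMinOn f (Set.Icc 0 R) xs) :
    |(a n₀ + b n₀) / 2 - xs| ≤
      Real.sqrt (2 * Real.goldenRatio * Δ * Real.logb Real.goldenRatio (C / Δ) / μ) := by
  have hφ1 : (1:ℝ) < goldenRatio := one_lt_goldenRatio
  have hφ0 : (0:ℝ) < goldenRatio := goldenRatio_pos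
  have hlogφ : 0 < Real.log goldenRatio := Real.log_pos hφ1
  have he : (0:ℝ) < Real.exp 1 := Real.exp_pos 1
  have hC0 : 0 < C := by rw [hC]; positivity
  -- φ ^ n₀ = C / (e Δ)
  have hφn : goldenRatio ^ n₀ = C / (Real.exp 1 * Δ) := by
    have h1 : goldenRatio ^ (n₀ : ℝ) = C / (Real.exp 1 * Δ) := by
      rw [hn₀]
      exact Real.rpow_logb hφ0 (ne_of_gt hφ1) (by positivity)
    rw [← Real.rpow_natCast goldenRatio n₀, h1]
  obtain ⟨hA0, hBR, hlen, y, hay, hyb, hfy⟩ :=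
    gr_invariant_s12 f R Δ hR hΔ hconv n₀ a b hrun xs hxs n₀ le_rfl
  set A := a n₀ with hA
  set B := b n₀ with hB
  set x₀ := (A + B) / 2 with hx₀
  have hd0 : 0 ≤ B - A := by rw [hlen]; positivity
  have hx0Icc : x₀ ∈ Set.Icc (0:ℝ) R := ⟨by rw [hx₀]; linarith, by rw [hx₀]; linarith⟩
  have hyIcc : y ∈ Set.Icc (0:ℝ) R := ⟨by linarith, by linarith⟩
  -- Lipschitz bound
  have h1 : f x₀ - f y ≤ M * ((B - A) / 2) := by
    have h2 := hlip x₀ hx0Icc y hyIcc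
    have h3 : |x₀ - y| ≤ (B - A) / 2 := by
      rw [abs_le]; constructor <;> [skip; skip] <;> rw [hx₀] <;> linarith
    calc f x₀ - f y ≤ |f x₀ - f y| := le_abs_self _
      _ ≤ M * |x₀ - y| := h2
      _ ≤ M * ((B - A) / 2) := by nlinarith [abs_nonneg (x₀ - y)]
  have h2 : M * ((B - A) / 2) = goldenRatio * Δ / Real.log goldenRatio := by
    rw [hlen, hφn, hC]
    field_simp
  -- logb identity
  have h4 : (n₀:ℝ) * (goldenRatio * Δ) + goldenRatio * Δ / Real.log goldenRatio
      = goldenRatio * Δ * Real.logb goldenRatio (C / Δ) := by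
    rw [hn₀, Real.logb, Real.logb, Real.log_div (ne_of_gt hC0) (by positivity),
      Real.log_div (ne_of_gt hC0) (by positivity),
      Real.log_mul (ne_of_gt he) (ne_of_gt hΔ), Real.log_exp]
    field_simp
    ring
  have h3 : f x₀ ≤ f xs + goldenRatio * Δ * Real.logb goldenRatio (C / Δ) := by
    rw [← h4]; linarith
  -- derivative nonnegativity at the minimizer
  have grad : 0 ≤ f' xs * (x₀ - xs) := by
    have hseg : segment ℝ xs x₀ ⊆ Set.Icc 0 R :=
      (convex_Icc (0:ℝ) R).segment_subset hxs hx0Icc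
    have hcone := sub_mem_posTangentConeAt_of_segment_subset hseg
    have hmin : IsLocalMinOn f (Set.Icc 0 R) xs := hxsmin.filter_mono inf_le_right
    have := hmin.hasFDerivWithinAt_nonneg (hdiff xs hxs).hasFDerivWithinAt hcone
    simpa [mul_comm] using this
  have sc := hsc xs hxs x₀ hx0Icc
  have h5 : μ / 2 * |x₀ - xs| ^ 2 ≤ goldenRatio * Δ * Real.logb goldenRatio (C / Δ) := by
    linarith
  apply Real.le_sqrt_of_sq_le
  rw [div_eq_mul_inv, ← div_eq_mul_inv, le_div_iff₀ hμ]
  nlinarith [h5]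
end
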